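/- arXiv:2401.12859 — 5 statements merged into one kernel-verified Lean document; each statement's English description precedes it below -/
import Mathlib

section
/- For positive integers a, m, i, j, k with j < k and 1 ≤ i, j, k ≤ m+1, the multichoose numbers satisfy ⟪a, m+2-(i+k)⟫ · ⟪a, m+1-(i+j)⟫ ≥ ⟪a, m+2-(i+j)⟫ · ⟪a, m+1-(i+k)⟫, where ⟪n, r⟫ denotes the multichoose number (interpreted as 0 when r < 0). -/
/-- Multichoose number `⟪a, r⟫ = C(a + r - 1, r)` for an integer index `r`,
interpreted as `0` when `r < 0`. -/
def mchoose0 (a : ℕ) (r : ℤ) : ℕ :=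
  if r < 0 then 0 else Nat.multichoose a r.toNat

lemma mchoose_step (b k : ℕ) :
    (k + 1) * Nat.multichoose (b + 1) (k + 1) = (b + 1 + k) * Nat.multichoose (b + 1) k := by
  rw [Nat.multichoose_eq, Nat.multichoose_eq]
  have h1 : b + 1 + (k + 1) - 1 = (b + k) + 1 := by omega
  have h2 : b + 1 + k - 1 = b + k := by omega
  rw [h1, h2]
  calc (k + 1) * (b + k + 1).choose (k + 1)
      = (b + k).succ.choose k.succ * k.succ := by rw [Nat.mul_comm]
    _ = (b + k).succ * (b + k).choose k := (Nat.add_one_mul_choose_eq _ _).symm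
    _ = (b + 1 + k) * (b + k).choose k := by rw [Nat.succ_eq_add_one]; ring

lemma mchoose_cross (b t s : ℕ) (hts : t ≤ s) :
    Nat.multichoose (b + 1) (t + 1) * Nat.multichoose (b + 1) s ≥
      Nat.multichoose (b + 1) (s + 1) * Nat.multichoose (b + 1) t := by
  have hpos : 0 < (s + 1) * (t + 1) := by positivity
  refine Nat.le_of_mul_le_mul_left ?_ hpos
  have h1 := mchoose_step b t
  have h2 := mchoose_step b s
  calc (s + 1) * (t + 1) * (Nat.multichoose (b + 1) (s + 1) * Nat.multichoose (b + 1) t)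
      = (t + 1) * ((s + 1) * Nat.multichoose (b + 1) (s + 1)) * Nat.multichoose (b + 1) t := by
        ring
    _ = (t + 1) * ((b + 1 + s) * Nat.multichoose (b + 1) s) * Nat.multichoose (b + 1) t := by
        rw [h2]
    _ ≤ (s + 1) * ((b + 1 + t) * Nat.multichoose (b + 1) t) * Nat.multichoose (b + 1) s := by
        have : (t + 1) * (b + 1 + s) ≤ (s + 1) * (b + 1 + t) := by nlinarith
        calc (t + 1) * ((b + 1 + s) * Nat.multichoose (b + 1) s) * Nat.multichoose (b + 1) t
            = ((t + 1) * (b + 1 + s)) * (Nat.multichoose (b + 1) s * Nat.multichoose (b + 1) t) := by ring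
          _ ≤ ((s + 1) * (b + 1 + t)) * (Nat.multichoose (b + 1) s * Nat.multichoose (b + 1) t) :=
              Nat.mul_le_mul_right _ this
          _ = (s + 1) * ((b + 1 + t) * Nat.multichoose (b + 1) t) * Nat.multichoose (b + 1) s := by ring
    _ = (s + 1) * ((t + 1) * Nat.multichoose (b + 1) (t + 1)) * Nat.multichoose (b + 1) s := by
        rw [h1]
    _ = (s + 1) * (t + 1) * (Nat.multichoose (b + 1) (t + 1) * Nat.multichoose (b + 1) s) := by
        ring

/-- For positive integers `a, m, i, j, k` with `j < k` and `1 ≤ i, j, k ≤ m + 1`, we have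
`⟪a, m+2-(i+k)⟫ ⬝ ⟪a, m+1-(i+j)⟫ ≥ ⟪a, m+2-(i+j)⟫ ⬝ ⟪a, m+1-(i+k)⟫`. -/
theorem multichoose_cross_ineq (a m i j k : ℕ) (ha : 0 < a) (hm : 0 < m) (hjk : j < k)
    (hi1 : 1 ≤ i) (hi2 : i ≤ m + 1) (hj1 : 1 ≤ j) (hj2 : j ≤ m + 1)
    (hk1 : 1 ≤ k) (hk2 : k ≤ m + 1) :
    mchoose0 a ((m : ℤ) + 2 - ((i : ℤ) + k)) * mchoose0 a ((m : ℤ) + 1 - ((i : ℤ) + j)) ≥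
      mchoose0 a ((m : ℤ) + 2 - ((i : ℤ) + j)) * mchoose0 a ((m : ℤ) + 1 - ((i : ℤ) + k)) := by
  set S : ℤ := (m : ℤ) + 1 - ((i : ℤ) + j) with hS
  set T : ℤ := (m : ℤ) + 1 - ((i : ℤ) + k) with hT
  have hTS : T < S := by simp [hS, hT]; omega
  have e1 : (m : ℤ) + 2 - ((i : ℤ) + k) = T + 1 := by omega
  have e2 : (m : ℤ) + 2 - ((i : ℤ) + j) = S + 1 := by omega
  rw [e1, e2]
  by_cases hT0 : T < 0
  · -- RHS has factor mchoose0 a T = 0, unless… check S+1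
    have : mchoose0 a T = 0 := by simp [mchoose0, hT0]
    rw [this, mul_zero]
    exact Nat.zero_le _
  · push_neg at hT0
    obtain ⟨t, ht⟩ : ∃ t : ℕ, T = (t : ℤ) := ⟨T.toNat, (Int.toNat_of_nonneg hT0).symm⟩
    have hS0 : 0 ≤ S := le_trans hT0 hTS.le
    obtain ⟨s, hs⟩ : ∃ s : ℕ, S = (s : ℤ) := ⟨S.toNat, (Int.toNat_of_nonneg hS0).symm⟩
    have hts : t ≤ s := by omega
    obtain ⟨b, rfl⟩ : ∃ b, a = b + 1 := ⟨a - 1, by omega⟩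
    have u1 : mchoose0 (b + 1) (T + 1) = Nat.multichoose (b + 1) (t + 1) := by
      rw [ht]; simp [mchoose0]
      congr 1
      omega
    have u2 : mchoose0 (b + 1) S = Nat.multichoose (b + 1) s := by
      rw [hs]; simp [mchoose0]
    have u3 : mchoose0 (b + 1) (S + 1) = Nat.multichoose (b + 1) (s + 1) := by
      rw [hs]; simp [mchoose0]
      congr 1
      omega
    have u4 : mchoose0 (b + 1) T = Nat.multichoose (b + 1) t := by
      rw [ht]; simp [mchoose0]
    rw [u1, u2, u3, u4]
    exact mchoose_cross b t s hts
end

section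
/- Let X = (x_1, ..., x_{m+1}) and Y = (y_1, ..., y_{m+1}) be vectors with all positive real entries such that x_i / x_{i+1} ≥ y_i / y_{i+1} > 0 for all 1 ≤ i ≤ m. Let a be a positive integer and let X' = Λ_m(a) X and Y' = Λ_m(a) Y, where Λ_m(a) is the (m+1)×(m+1) matrix with (i,j)-entry ⟪a, m+2-i-j⟫. Then y'_i / y'_{i+1} ≥ x'_i / x'_{i+1} > 0 for all 1 ≤ i ≤ m. -/
open scoped BigOperators

/-- Generalized binomial coefficient `C(n,k)` for integer `n` and `k`, valued in `ℝ`: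
`n(n-1)⋯(n-k+1)/k!` for `k ≥ 0`, and `0` for `k < 0`. -/
noncomputable def ichooseR (n : ℤ) (k : ℤ) : ℝ :=
  if k < 0 then 0 else (∏ i ∈ Finset.range k.toNat, ((n : ℝ) - i)) / (k.toNat.factorial : ℝ)

/-- Generalized multichoose `⟪n, r⟫ = C(n + r - 1, r)`, valued in `ℝ`. -/
noncomputable def imchooseR (n : ℤ) (r : ℤ) : ℝ := ichooseR (n + r - 1) r

/-- The `(m+1)×(m+1)` real matrix `Λ_m(a)` whose (1-indexed) `(i,j)`-entry is
`⟪a, m + 2 - i - j⟫`. -/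
noncomputable def LamR (m : ℕ) (a : ℤ) : Matrix (Fin (m+1)) (Fin (m+1)) ℝ :=
  fun i j => imchooseR a ((m : ℤ) - (i : ℕ) - (j : ℕ))

lemma imchooseR_neg (a r : ℤ) (hr : r < 0) : imchooseR a r = 0 := by
  simp [imchooseR, ichooseR, hr]

lemma imchooseR_nat (a : ℤ) (n : ℕ) :
    imchooseR a n = (∏ i ∈ Finset.range n, ((a:ℝ) + n - 1 - i)) / (n.factorial : ℝ) := by
  have h : ¬ ((n:ℤ) < 0) := by omega
  simp only [imchooseR, ichooseR, h, if_false, Int.toNat_natCast]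
  congr 1
  apply Finset.prod_congr rfl
  intro i _
  push_cast
  ring

lemma imchooseR_nat_pos {a : ℤ} (ha : 0 < a) (n : ℕ) : 0 < imchooseR a n := by
  rw [imchooseR_nat]
  apply div_pos
  · apply Finset.prod_pos
    intro i hi
    simp only [Finset.mem_range] at hi
    have h1 : (1:ℝ) ≤ (a:ℝ) := by exact_mod_cast ha
    have h2 : (i:ℝ) ≤ (n:ℝ) - 1 := by
      have : (i:ℝ) + 1 ≤ n := by exact_mod_cast hi
      linarith
    linarith
  · exact_mod_cast Nat.factorial_pos n

lemma imchooseR_succ (a : ℤ) (n : ℕ) :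
    ((n:ℝ)+1) * imchooseR a ((n:ℤ)+1) = ((a:ℝ) + n) * imchooseR a n := by
  have h1 : ((n:ℤ)+1) = ((n+1 : ℕ) : ℤ) := by push_cast; ring
  rw [h1, imchooseR_nat, imchooseR_nat]
  rw [Finset.prod_range_succ', Nat.factorial_succ]
  have : ∀ i ∈ Finset.range n, ((a:ℝ) + ((n+1:ℕ):ℝ) - 1 - ((i+1:ℕ):ℝ)) = (a:ℝ) + n - 1 - i := by
    intro i _; push_cast; ring
  rw [Finset.prod_congr rfl this]
  push_cast
  field_simp
  ring

lemma imchooseR_pos {a : ℤ} (ha : 0 < a) {r : ℤ} (hr : 0 ≤ r) : 0 < imchooseR a r := by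
  obtain ⟨n, rfl⟩ : ∃ n : ℕ, r = (n:ℤ) := ⟨r.toNat, by omega⟩
  exact imchooseR_nat_pos ha n

lemma imchooseR_nonneg {a : ℤ} (ha : 0 < a) (r : ℤ) : 0 ≤ imchooseR a r := by
  rcases lt_or_ge r 0 with h | h
  · rw [imchooseR_neg a r h]
  · exact (imchooseR_pos ha h).le

lemma cross_nat {a : ℤ} (ha : 0 < a) {u v : ℕ} (h : u ≤ v) :
    imchooseR a u * imchooseR a ((v:ℤ)+1) ≤ imchooseR a ((u:ℤ)+1) * imchooseR a v := by
  have hu := imchooseR_succ a u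
  have hv := imchooseR_succ a v
  have hcu := imchooseR_nat_pos ha u
  have hcv := imchooseR_nat_pos ha v
  have h1 : imchooseR a ((v:ℤ)+1) = ((a:ℝ) + v) * imchooseR a v / ((v:ℝ)+1) := by
    field_simp at hv ⊢; linarith
  have h2 : imchooseR a ((u:ℤ)+1) = ((a:ℝ) + u) * imchooseR a u / ((u:ℝ)+1) := by
    field_simp at hu ⊢; linarith
  rw [h1, h2]
  have key : ((a:ℝ) + v) / ((v:ℝ)+1) ≤ ((a:ℝ) + u) / ((u:ℝ)+1) := by
    rw [div_le_div_iff₀ (by positivity) (by positivity)]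
    have h1a : (1:ℝ) ≤ (a:ℝ) := by exact_mod_cast ha
    have huv : (u:ℝ) ≤ (v:ℝ) := by exact_mod_cast h
    nlinarith
  calc imchooseR a u * (((a:ℝ) + v) * imchooseR a v / ((v:ℝ)+1))
      = (((a:ℝ) + v) / ((v:ℝ)+1)) * (imchooseR a u * imchooseR a v) := by ring
    _ ≤ (((a:ℝ) + u) / ((u:ℝ)+1)) * (imchooseR a u * imchooseR a v) := by
        apply mul_le_mul_of_nonneg_right key; positivity
    _ = ((a:ℝ) + u) * imchooseR a u / ((u:ℝ)+1) * imchooseR a v := by ring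

lemma cross_int {a : ℤ} (ha : 0 < a) {u v : ℤ} (h : u ≤ v) :
    imchooseR a (u-1) * imchooseR a v ≤ imchooseR a u * imchooseR a (v-1) := by
  rcases lt_trichotomy u 0 with hu | hu | hu
  · rw [imchooseR_neg a (u-1) (by omega), imchooseR_neg a u hu]
    simp
  · subst hu
    rw [imchooseR_neg a (0-1) (by omega)]
    simp only [zero_mul]
    exact mul_nonneg (imchooseR_nonneg ha 0) (imchooseR_nonneg ha (v-1))
  · obtain ⟨un, rfl⟩ : ∃ n : ℕ, u = (n:ℤ)+1 := ⟨(u-1).toNat, by omega⟩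
    obtain ⟨vn, rfl⟩ : ∃ n : ℕ, v = (n:ℤ)+1 := ⟨(v-1).toNat, by omega⟩
    have huv : un ≤ vn := by omega
    have := cross_nat ha huv
    simpa using this

/-- Let `X, Y` be positive vectors with `xᵢ/xᵢ₊₁ ≥ yᵢ/yᵢ₊₁ > 0` for `1 ≤ i ≤ m`, let `a` be a
positive integer, and let `X' = Λ_m(a) X`, `Y' = Λ_m(a) Y`.  Then
`y'ᵢ/y'ᵢ₊₁ ≥ x'ᵢ/x'ᵢ₊₁ > 0` for all `1 ≤ i ≤ m`. -/
theorem Lam_mulVec_reverses_ratio_ineqs (m : ℕ) (a : ℤ) (ha : 0 < a)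
    (X Y : Fin (m+1) → ℝ) (hX : ∀ i, 0 < X i) (hY : ∀ i, 0 < Y i)
    (hXY : ∀ i : Fin m, X i.castSucc / X i.succ ≥ Y i.castSucc / Y i.succ) :
    ∀ i : Fin m,
      ((LamR m a).mulVec Y) i.castSucc / ((LamR m a).mulVec Y) i.succ ≥
        ((LamR m a).mulVec X) i.castSucc / ((LamR m a).mulVec X) i.succ ∧
      0 < ((LamR m a).mulVec X) i.castSucc / ((LamR m a).mulVec X) i.succ := by
  -- monotone cross inequality for X, Y
  have hstep : ∀ t : Fin m, Y t.castSucc * X t.succ ≤ X t.castSucc * Y t.succ := by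
    intro t
    have := hXY t
    rw [ge_iff_le, div_le_div_iff₀ (hY t.succ) (hX t.succ)] at this
    linarith
  have hmono : ∀ d : ℕ, ∀ j k : Fin (m+1), (k:ℕ) = (j:ℕ) + d → X k * Y j ≤ X j * Y k := by
    intro d
    induction d with
    | zero =>
      intro j k hk
      have : j = k := Fin.ext (by omega)
      subst this; exact le_refl _
    | succ d ih =>
      intro j k hk
      have hjd : (j:ℕ) + d < m := by omega
      set t : Fin (m+1) := ⟨(j:ℕ) + d, by omega⟩ with ht
      have h1 : X t * Y j ≤ X j * Y t := ih j t rfl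
      have ht' : Fin m := ⟨(j:ℕ) + d, hjd⟩
      have h2 : Y t * X k ≤ X t * Y k := by
        have hc : (Fin.castSucc ⟨(j:ℕ)+d, hjd⟩ : Fin (m+1)) = t := by
          apply Fin.ext; simp [ht]
        have hs : (Fin.succ ⟨(j:ℕ)+d, hjd⟩ : Fin (m+1)) = k := by
          apply Fin.ext; simp [Fin.val_succ]; omega
        have := hstep ⟨(j:ℕ)+d, hjd⟩
        rw [hc, hs] at this
        linarith
      nlinarith [hX t, hY t, hX j, hY j, hX k, hY k, mul_le_mul h1 h2
        (mul_nonneg (hY t).le (hX k).le) (mul_nonneg (hX j).le (hY t).le)]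
  have hcross : ∀ j k : Fin (m+1), (j:ℕ) ≤ (k:ℕ) → X k * Y j ≤ X j * Y k := by
    intro j k h
    exact hmono ((k:ℕ) - (j:ℕ)) j k (by omega)
  -- positivity of mulVec
  have hIc : ∀ (U : Fin (m+1) → ℝ) (p : Fin (m+1)), (LamR m a).mulVec U p
      = ∑ j, LamR m a p j * U j := by
    intro U p
    simp [Matrix.mulVec, dotProduct]
  have hpos : ∀ (U : Fin (m+1) → ℝ), (∀ i, 0 < U i) → ∀ p : Fin (m+1),
      0 < (LamR m a).mulVec U p := by
    intro U hU p
    rw [hIc]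
    apply Finset.sum_pos'
    · intro j _
      exact mul_nonneg (imchooseR_nonneg ha _) (hU j).le
    · refine ⟨0, Finset.mem_univ _, ?_⟩
      apply mul_pos _ (hU 0)
      apply imchooseR_pos ha
      have := p.isLt
      simp only [Fin.val_zero]
      omega
  intro i
  set ic := i.castSucc with hic
  set is := i.succ with his
  have hx's := hpos X hX is
  have hx'c := hpos X hX ic
  have hy's := hpos Y hY is
  have hy'c := hpos Y hY ic
  have hicv : (ic : ℕ) = (i : ℕ) := rfl
  have hisv : (is : ℕ) = (i : ℕ) + 1 := rfl
  -- key pairwise inequality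
  have L := LamR m a
  have hkey' : ∀ j k : Fin (m+1), (j:ℕ) ≤ (k:ℕ) →
      0 ≤ (LamR m a ic j * LamR m a is k - LamR m a ic k * LamR m a is j)
        * (Y j * X k - X j * Y k) := by
    intro j k hjk
    have hA : LamR m a ic j * LamR m a is k - LamR m a ic k * LamR m a is j ≤ 0 := by
      rw [sub_nonpos]
      have hc := cross_int ha (show (m:ℤ) - (i:ℕ) - (k:ℕ) ≤ (m:ℤ) - (i:ℕ) - (j:ℕ) by omega)
      have e1 : ((m:ℤ) - (i:ℕ) - (k:ℕ)) - 1 = (m:ℤ) - ((is:ℕ):ℤ) - (k:ℕ) := by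
        rw [hisv]; push_cast; ring
      have e2 : ((m:ℤ) - (i:ℕ) - (j:ℕ)) - 1 = (m:ℤ) - ((is:ℕ):ℤ) - (j:ℕ) := by
        rw [hisv]; push_cast; ring
      rw [e1, e2] at hc
      simp only [LamR, hicv]
      linarith
    have hB : Y j * X k - X j * Y k ≤ 0 := by
      rw [sub_nonpos]
      have := hcross j k hjk
      linarith
    nlinarith [hA, hB]
  have hkey : ∀ j k : Fin (m+1),
      0 ≤ (LamR m a ic j * LamR m a is k - LamR m a ic k * LamR m a is j)
        * (Y j * X k - X j * Y k) := by
    intro j k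
    rcases le_total (j:ℕ) (k:ℕ) with h | h
    · exact hkey' j k h
    · have := hkey' k j h
      nlinarith [this]
  -- sum manipulation
  set F : Fin (m+1) → Fin (m+1) → ℝ :=
    fun j k => LamR m a ic j * LamR m a is k * (Y j * X k - X j * Y k) with hF
  have hFsum : 0 ≤ ∑ j, ∑ k, F j k := by
    have h2 : 0 ≤ ∑ j, ∑ k, (F j k + F k j) := by
      apply Finset.sum_nonneg; intro j _
      apply Finset.sum_nonneg; intro k _
      have := hkey j k
      simp only [hF]
      nlinarith [this]
    have h3 : ∑ j, ∑ k, (F j k + F k j)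
        = (∑ j, ∑ k, F j k) + ∑ j, ∑ k, F k j := by
      rw [← Finset.sum_add_distrib]
      apply Finset.sum_congr rfl
      intro j _
      rw [← Finset.sum_add_distrib]
    have h4 : ∑ j : Fin (m+1), ∑ k : Fin (m+1), F k j = ∑ j, ∑ k, F j k :=
      Finset.sum_comm
    linarith
  have hmain : (LamR m a).mulVec X ic * (LamR m a).mulVec Y is
      ≤ (LamR m a).mulVec Y ic * (LamR m a).mulVec X is := by
    rw [hIc X ic, hIc Y is, hIc Y ic, hIc X is,
      Finset.sum_mul_sum, Finset.sum_mul_sum]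
    rw [← sub_nonneg, ← Finset.sum_sub_distrib]
    have : ∀ j : Fin (m+1),
        (∑ k, (LamR m a ic j * Y j) * (LamR m a is k * X k))
          - (∑ k, (LamR m a ic j * X j) * (LamR m a is k * Y k))
        = ∑ k, F j k := by
      intro j
      rw [← Finset.sum_sub_distrib]
      apply Finset.sum_congr rfl
      intro k _
      simp only [hF]; ring
    calc (0:ℝ) ≤ ∑ j, ∑ k, F j k := hFsum
      _ = _ := by
        apply Finset.sum_congr rfl
        intro j _
        rw [this j]
  constructor
  · rw [ge_iff_le, div_le_div_iff₀ hx's hy's]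
    linarith
  · exact div_pos hx'c hx's
end

section
/- For a positive integer n and 1 ≤ i ≤ m, the higher continued fraction values satisfy r_{i,m}(n) = ⟪n, i⟫ = C(n+i-1, i), and hence the ratio r_{i,m}(n) / r_{i-1,m}(n) equals (n-1+i)/i. -/
open scoped BigOperators

/-- Generalized binomial coefficient `C(n,k)` for integer `n` and `k`, valued in `ℚ`:
`n(n-1)⋯(n-k+1)/k!` for `k ≥ 0`, and `0` for `k < 0`. -/
def ichoose (n : ℤ) (k : ℤ) : ℚ :=
  if k < 0 then 0 else (∏ i ∈ Finset.range k.toNat, ((n : ℚ) - i)) / (k.toNat.factorial : ℚ)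

/-- Generalized multichoose `⟪n, r⟫ = C(n + r - 1, r)`. -/
def imchoose (n : ℤ) (r : ℤ) : ℚ := ichoose (n + r - 1) r

/-- The `(m+1)×(m+1)` matrix `Λ_m(a)` whose (1-indexed) `(i,j)`-entry is `⟪a, m + 2 - i - j⟫`. -/
def Lam (m : ℕ) (a : ℤ) : Matrix (Fin (m+1)) (Fin (m+1)) ℚ :=
  fun i j => imchoose a ((m : ℤ) - (i : ℕ) - (j : ℕ))

/-- The product `Λ_m(a₁) ⋯ Λ_m(aₙ)` for a continued fraction `[a₁, …, aₙ]`. -/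
def CFmat (m : ℕ) (l : List ℤ) : Matrix (Fin (m+1)) (Fin (m+1)) ℚ :=
  (l.map (Lam m)).prod

/-- `r_{i,m}` of the continued fraction `l`: the `(m+1-i)`-th entry (1-indexed) of the first
column of the matrix product `Λ_m(a₁) ⋯ Λ_m(aₙ)`, divided by the bottom-left entry. -/
def rCF (m : ℕ) (l : List ℤ) (i : ℕ) : ℚ :=
  CFmat m l ⟨m - i, by omega⟩ ⟨0, by omega⟩ / CFmat m l ⟨m, by omega⟩ ⟨0, by omega⟩

/-- The value of a continued fraction `[a₁, …, aₙ] = a₁ + 1/(a₂ + 1/(⋯))`. -/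
def cfVal : List ℤ → ℚ
  | [] => 0
  | [a] => a
  | a :: l => a + 1 / cfVal l

lemma prod_cast_sub (N k : ℕ) :
    (∏ i ∈ Finset.range k, ((N : ℚ) - i)) = (N.descFactorial k : ℚ) := by
  rcases lt_or_ge N k with h | h
  · rw [Nat.descFactorial_eq_zero_iff_lt.2 h, Nat.cast_zero]
    apply Finset.prod_eq_zero (Finset.mem_range.2 h)
    simp
  · rw [Nat.descFactorial_eq_prod_range, Nat.cast_prod]
    refine Finset.prod_congr rfl fun i hi => ?_
    have : i ≤ N := le_trans (le_of_lt (Finset.mem_range.1 hi)) h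
    rw [Nat.cast_sub this]

lemma ichoose_natCast (N k : ℕ) : ichoose (N : ℤ) (k : ℤ) = (N.choose k : ℚ) := by
  rw [ichoose, if_neg (by omega), Int.toNat_natCast]
  push_cast
  rw [prod_cast_sub, Nat.descFactorial_eq_factorial_mul_choose]
  push_cast
  rw [mul_comm, mul_div_assoc, div_self (by exact_mod_cast k.factorial_ne_zero), mul_one]

lemma imchoose_natCast (n j : ℕ) (hn : 0 < n) :
    imchoose (n : ℤ) (j : ℤ) = (Nat.multichoose n j : ℚ) := by
  have h : (n : ℤ) + j - 1 = ((n + j - 1 : ℕ) : ℤ) := by omega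
  rw [imchoose, h, ichoose_natCast, Nat.multichoose_eq]

lemma rCF_single (m n j : ℕ) (hn : 0 < n) (hj : j ≤ m) :
    rCF m [(n : ℤ)] j = (Nat.multichoose n j : ℚ) := by
  have hC : CFmat m [(n : ℤ)] = Lam m (n : ℤ) := by
    simp [CFmat]
  have h1 : ((⟨m - j, by omega⟩ : Fin (m+1)) : ℕ) = m - j := rfl
  have h2 : (m : ℤ) - (m - j : ℕ) - ((0 : ℕ) : ℤ) = (j : ℤ) := by omega
  have h3 : (m : ℤ) - (m : ℕ) - ((0 : ℕ) : ℤ) = ((0 : ℕ) : ℤ) := by omega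
  rw [rCF, hC, Lam, Lam]
  simp only [h1]
  rw [h2, h3, imchoose_natCast n j hn, imchoose_natCast n 0 hn]
  simp [Nat.multichoose]

/-- For a positive integer `n` and `1 ≤ i ≤ m`, the higher continued fraction values satisfy
`r_{i,m}(n) = ⟪n, i⟫ = C(n+i-1, i)`, and hence `r_{i,m}(n) / r_{i-1,m}(n) = (n-1+i)/i`. -/
theorem rCF_int (m n i : ℕ) (hn : 0 < n) (hi : 1 ≤ i) (him : i ≤ m) :
    rCF m [(n : ℤ)] i = (Nat.multichoose n i : ℚ) ∧
    rCF m [(n : ℤ)] i / rCF m [(n : ℤ)] (i - 1) = ((n : ℚ) - 1 + i) / i := by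
  refine ⟨rCF_single m n i hn him, ?_⟩
  rw [rCF_single m n i hn him, rCF_single m n (i - 1) hn (by omega)]
  obtain ⟨k, rfl⟩ : ∃ k, i = k + 1 := ⟨i - 1, by omega⟩
  simp only [Nat.add_sub_cancel]
  have key : Nat.multichoose n (k + 1) * (k + 1) = Nat.multichoose n k * (n + k) := by
    rw [Nat.multichoose_eq, Nat.multichoose_eq]
    have h1 : n + (k + 1) - 1 = (n + k - 1) + 1 := by omega
    have h2 : n + k - 1 + 1 = n + k := by omega
    rw [h1, ← Nat.add_one_mul_choose_eq, h2]
    ring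
  have hb : 0 < Nat.multichoose n k := by
    rw [Nat.multichoose_eq]; exact Nat.choose_pos (by omega)
  have hbq : ((Nat.multichoose n k : ℕ) : ℚ) ≠ 0 := by exact_mod_cast hb.ne'
  have hkq : (((k + 1 : ℕ)) : ℚ) ≠ 0 := by positivity
  rw [div_eq_div_iff hbq hkq]
  have hcast : ((n : ℚ) - 1 + ((k + 1 : ℕ) : ℚ)) = ((n + k : ℕ) : ℚ) := by
    have h1 : (1 : ℚ) ≤ (n : ℚ) := by exact_mod_cast hn
    push_cast
    ring
  rw [hcast]
  exact_mod_cast key.trans (Nat.mul_comm _ _)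
end

section
/- Let x ≥ 1 be a rational number that is not an integer, with n = ⌊x⌋. Then for all m ≥ 1 and 1 ≤ i ≤ m, the strict inequalities (n-1+i)/i < r_{i,m}(x)/r_{i-1,m}(x) < (n+i)/i hold. -/
open scoped BigOperators

namespace RCFA
open Finset

lemma imchoose_neg (a k : ℤ) (hk : k < 0) : imchoose a k = 0 := by
  simp [imchoose, ichoose, hk]

lemma imchoose_natCast (A t : ℕ) (hA : 1 ≤ A) :
    imchoose (A : ℤ) (t : ℤ) = ((A - 1 + t).choose t : ℚ) := by
  have h0 : ¬ ((t : ℤ) < 0) := by omega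
  rw [imchoose, ichoose, if_neg h0]
  have ht : (t : ℤ).toNat = t := Int.toNat_natCast t
  rw [ht]
  have hprod : (∏ i ∈ Finset.range t, ((((A : ℤ) + t - 1 : ℤ) : ℚ) - (i : ℚ)))
      = (((A - 1 + t).descFactorial t : ℕ) : ℚ) := by
    rw [Nat.descFactorial_eq_prod_range, Nat.cast_prod]
    apply Finset.prod_congr rfl
    intro i hi
    have hi' : i < t := Finset.mem_range.mp hi
    have hle : i ≤ A - 1 + t := by omega
    rw [Nat.cast_sub hle]
    have : ((A - 1 + t : ℕ) : ℚ) = ((A : ℤ) + t - 1 : ℤ) := by push_cast [hA]; ring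
    rw [this]
  rw [hprod, Nat.descFactorial_eq_factorial_mul_choose]
  push_cast
  rw [mul_comm]
  rw [mul_div_assoc, div_self (by positivity), mul_one]

end RCFA
namespace RCFA

lemma imchoose_eq (a : ℤ) (ha : 1 ≤ a) (k : ℤ) (hk : 0 ≤ k) :
    imchoose a k = ((a.toNat - 1 + k.toNat).choose k.toNat : ℚ) := by
  have h := imchoose_natCast a.toNat k.toNat (by omega)
  rw [show ((a.toNat : ℕ) : ℤ) = a by omega, show ((k.toNat : ℕ) : ℤ) = k by omega] at h
  exact h

lemma imchoose_pos (a : ℤ) (ha : 1 ≤ a) (k : ℤ) (hk : 0 ≤ k) : 0 < imchoose a k := by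
  rw [imchoose_eq a ha k hk]
  exact_mod_cast Nat.choose_pos (by omega)

lemma imchoose_nonneg (a : ℤ) (ha : 1 ≤ a) (k : ℤ) : 0 ≤ imchoose a k := by
  rcases lt_or_ge k 0 with h | h
  · rw [imchoose_neg a k h]
  · exact (imchoose_pos a ha k h).le

/-- ratio identity: `k ⟪a,k⟫ = (a+k-1) ⟪a,k-1⟫`. -/
lemma imchoose_ratio (a : ℤ) (ha : 1 ≤ a) (k : ℤ) :
    (k : ℚ) * imchoose a k = ((a : ℚ) + k - 1) * imchoose a (k - 1) := by
  rcases lt_or_ge k 0 with h | h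
  · rw [imchoose_neg a k h, imchoose_neg a _ (by omega), mul_zero, mul_zero]
  rcases eq_or_lt_of_le h with h0 | h1
  · rw [← h0, imchoose_neg a (0-1) (by omega)]
    simp
  · have hk1 : (0:ℤ) ≤ k - 1 := by omega
    rw [imchoose_eq a ha k h, imchoose_eq a ha (k-1) hk1]
    set A := a.toNat with hA
    set t := k.toNat with htd
    have ht1 : 1 ≤ t := by omega
    have hA1 : 1 ≤ A := by omega
    have hkt : ((k - 1).toNat) = t - 1 := by omega
    rw [hkt]
    have key := Nat.add_one_mul_choose_eq (A + t - 2) (t - 1)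
    have e1 : (A + t - 2) + 1 = A - 1 + t := by omega
    have e2 : (t - 1) + 1 = t := by omega
    have e3 : A + t - 2 = A - 1 + (t - 1) := by omega
    rw [e1, e2] at key
    rw [e3] at key
    have hcast : ((k:ℚ)) = (t : ℚ) := by rw [show k = (t:ℤ) by omega]; push_cast; ring
    have hcast2 : ((a:ℚ) + k - 1) = ((A - 1 + t : ℕ) : ℚ) := by
      have ha' : a = (A:ℤ) := by omega
      have hk' : k = (t:ℤ) := by omega
      rw [ha', hk', Nat.cast_add, Nat.cast_sub hA1]
      push_cast
      ring
    rw [hcast2, hcast, ← Nat.cast_mul, ← Nat.cast_mul]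
    norm_cast
    simpa [Nat.mul_comm] using key.symm

end RCFA
namespace RCFA

/-- Pascal: `⟪a+1,k⟫ = ⟪a+1,k-1⟫ + ⟪a,k⟫`. -/
lemma imchoose_pascal (a : ℤ) (ha : 1 ≤ a) (k : ℤ) :
    imchoose (a+1) k = imchoose (a+1) (k-1) + imchoose a k := by
  have ha1 : (1:ℤ) ≤ a + 1 := by omega
  rcases lt_or_ge k 0 with h | h
  · rw [imchoose_neg _ k h, imchoose_neg _ _ (by omega), imchoose_neg _ k h]; ring
  rcases eq_or_lt_of_le h with h0 | h1
  · rw [← h0, imchoose_neg _ (0-1) (by omega)]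
    rw [imchoose_eq _ ha1 0 le_rfl, imchoose_eq _ ha 0 le_rfl]
    simp
  · rw [imchoose_eq _ ha1 k h, imchoose_eq _ ha1 (k-1) (by omega), imchoose_eq _ ha k h]
    set A := a.toNat
    set t := k.toNat
    have ht1 : 1 ≤ t := by omega
    have hA1 : 1 ≤ A := by omega
    have e0 : (a+1).toNat = A + 1 := by omega
    have e1 : (k-1).toNat = t - 1 := by omega
    rw [e0, e1]
    have key := Nat.choose_succ_succ (A + t - 1) (t - 1)
    simp only [Nat.succ_eq_add_one] at key
    have f1 : (A + t - 1) + 1 = A + 1 - 1 + t := by omega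
    have f2 : (t - 1) + 1 = t := by omega
    rw [f1, f2] at key
    have g1 : (A + t - 1).choose (t-1) = (A+1-1+(t-1)).choose (t-1) := by congr 1; omega
    have g2 : (A + t - 1).choose t = (A-1+t).choose t := by congr 1; omega
    rw [key, g1, g2]
    push_cast
    ring

/-- Sliding hockey stick: `∑_{k≤N} ⟪a, K-k⟫ = ⟪a+1, K⟫` when `K ≤ N`. -/
lemma imchoose_slide (a : ℤ) (ha : 1 ≤ a) :
    ∀ (N : ℕ) (K : ℤ), K ≤ N →
      (∑ k ∈ Finset.range (N+1), imchoose a (K - k)) = imchoose (a+1) K := by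
  intro N
  induction N with
  | zero =>
    intro K hK
    norm_num [Finset.sum_range_one]
    rcases lt_or_ge K 0 with h | h
    · rw [imchoose_neg _ _ h, imchoose_neg _ _ h]
    · have : K = 0 := by omega
      subst this
      rw [imchoose_eq _ ha 0 le_rfl, imchoose_eq _ (by omega) 0 le_rfl]
      simp
  | succ N ih =>
    intro K hK
    rcases le_or_gt K N with h | h
    · rw [Finset.sum_range_succ, ih K h]
      have hz : imchoose a (K - ((N+1 : ℕ) : ℤ)) = 0 :=
        imchoose_neg a _ (by push_cast; omega)
      rw [hz]
      ring
    · have hK1 : K - 1 ≤ N := by omega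
      rw [Finset.sum_range_succ']
      have h2 : (∑ k ∈ Finset.range (N+1), imchoose a (K - ((k+1 : ℕ) : ℤ)))
          = ∑ k ∈ Finset.range (N+1), imchoose a ((K-1) - k) := by
        apply Finset.sum_congr rfl
        intro k _
        congr 1
        push_cast
        ring
      rw [h2, ih (K-1) hK1, imchoose_pascal a ha K]
      norm_num

/-- Abel summation. -/
lemma abel_sum (d u : ℕ → ℚ) :
    ∀ N : ℕ, (∑ j ∈ Finset.range (N+1), d j * u j)
      = (∑ t ∈ Finset.range N, (∑ j ∈ Finset.range (t+1), d j) * (u t - u (t+1)))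
        + (∑ j ∈ Finset.range (N+1), d j) * u N := by
  intro N
  induction N with
  | zero => simp
  | succ N ih =>
    rw [Finset.sum_range_succ (fun j => d j * u j), ih, Finset.sum_range_succ
      (fun t => (∑ j ∈ Finset.range (t+1), d j) * (u t - u (t+1))),
      Finset.sum_range_succ d (N+1)]
    ring

end RCFA
namespace RCFA

lemma imchoose_zero (a : ℤ) (ha : 1 ≤ a) : imchoose a 0 = 1 := by
  rw [imchoose_eq a ha 0 le_rfl]; norm_num

lemma imchoose_one_arg (k : ℤ) (hk : 0 ≤ k) : imchoose 1 k = 1 := by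
  rw [imchoose_eq 1 le_rfl k hk]
  norm_num

lemma cfVal_cons (a : ℤ) (l : List ℤ) (hl : l ≠ []) :
    cfVal (a :: l) = (a : ℚ) + 1 / cfVal l := by
  cases l with
  | nil => exact absurd rfl hl
  | cons b t => rfl

lemma cfVal_single (a : ℤ) : cfVal [a] = (a : ℚ) := rfl

lemma CFmat_cons (m : ℕ) (a : ℤ) (l : List ℤ) :
    CFmat m (a :: l) = Lam m a * CFmat m l := by
  simp [CFmat]

lemma CFmat_single (m : ℕ) (a : ℤ) : CFmat m [a] = Lam m a := by
  simp [CFmat]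

/-- The column vector entries, indexed from the bottom. -/
def wcol (m : ℕ) (l : List ℤ) (i : ℕ) : ℚ :=
  CFmat m l ⟨m - i, by omega⟩ ⟨0, by omega⟩

lemma wcol_single (m : ℕ) (b : ℤ) (i : ℕ) (hi : i ≤ m) :
    wcol m [b] i = imchoose b i := by
  rw [wcol, CFmat_single]
  show imchoose b ((m : ℤ) - ((m - i : ℕ) : ℤ) - ((0:ℕ) : ℤ)) = imchoose b i
  congr 1
  rw [Nat.cast_sub hi]
  push_cast
  ring

lemma wcol_cons (m : ℕ) (a : ℤ) (l : List ℤ) (r : ℕ) (hr : r ≤ m) :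
    wcol m (a :: l) r
      = ∑ j ∈ Finset.range (m+1), imchoose a ((r : ℤ) - j) * wcol m l (m - j) := by
  rw [wcol, CFmat_cons, Matrix.mul_apply, ← Fin.sum_univ_eq_sum_range
    (fun j => imchoose a ((r : ℤ) - j) * wcol m l (m - j)) (m+1)]
  apply Finset.sum_congr rfl
  intro j _
  have h1 : Lam m a ⟨m - r, by omega⟩ j = imchoose a ((r : ℤ) - (j : ℕ)) := by
    show imchoose a ((m : ℤ) - ((m - r : ℕ) : ℤ) - ((j : ℕ) : ℤ)) = _
    congr 1
    rw [Nat.cast_sub hr]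
    ring
  have h2 : CFmat m l j ⟨0, by omega⟩ = wcol m l (m - (j : ℕ)) := by
    rw [wcol]
    congr 1
    ext
    simp only []
    omega
  rw [h1, h2]

/-- First-column merge: the first column of `Λ(c)Λ(1)` equals that of `Λ(c+1)`. -/
lemma col_merge (m : ℕ) (c : ℤ) (hc : 1 ≤ c) (i : Fin (m+1)) :
    (Lam m c * Lam m 1) i ⟨0, by omega⟩ = Lam m (c+1) i ⟨0, by omega⟩ := by
  rw [Matrix.mul_apply]
  have : ∀ j : Fin (m+1), Lam m c i j * Lam m 1 j ⟨0, by omega⟩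
      = imchoose c (((m : ℤ) - (i:ℕ)) - (j:ℕ)) := by
    intro j
    have hj : Lam m 1 j ⟨0, by omega⟩ = 1 := by
      show imchoose 1 ((m:ℤ) - (j:ℕ) - ((0:ℕ):ℤ)) = 1
      apply imchoose_one_arg
      have := j.isLt
      push_cast
      omega
    rw [hj, mul_one]
    rfl
  rw [Finset.sum_congr rfl (fun j _ => this j)]
  rw [Fin.sum_univ_eq_sum_range (fun j => imchoose c (((m : ℤ) - (i:ℕ)) - j)) (m+1)]
  rw [imchoose_slide c hc m ((m:ℤ) - (i:ℕ)) (by push_cast; omega)]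
  show _ = imchoose (c+1) ((m:ℤ) - (i:ℕ) - ((0:ℕ):ℤ))
  norm_num

/-- First-column invariance for trailing `[c,1] → [c+1]`. -/
lemma CFmat_merge (m : ℕ) (l' : List ℤ) (c : ℤ) (hc : 1 ≤ c) (i : Fin (m+1)) :
    CFmat m (l' ++ [c, 1]) i ⟨0, by omega⟩ = CFmat m (l' ++ [c+1]) i ⟨0, by omega⟩ := by
  have h1 : CFmat m (l' ++ [c, 1]) = CFmat m l' * (Lam m c * Lam m 1) := by
    simp [CFmat, List.map_append, List.prod_append, Matrix.mul_assoc]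
  have h2 : CFmat m (l' ++ [c+1]) = CFmat m l' * Lam m (c+1) := by
    simp [CFmat, List.map_append, List.prod_append]
  rw [h1, h2, Matrix.mul_apply, Matrix.mul_apply]
  apply Finset.sum_congr rfl
  intro k _
  rw [col_merge m c hc k]

lemma cfVal_merge (c : ℤ) : ∀ (l' : List ℤ), cfVal (l' ++ [c, 1]) = cfVal (l' ++ [c+1])
  | [] => by
      show cfVal [c, 1] = cfVal [c+1]
      rw [cfVal_cons c [1] (by simp), cfVal_single, cfVal_single]
      push_cast
      norm_num
  | a :: l'' => by
      have h1 : (l'' ++ [c, 1]) ≠ [] := by simp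
      have h2 : (l'' ++ [c+1]) ≠ [] := by simp
      show cfVal (a :: (l'' ++ [c, 1])) = cfVal (a :: (l'' ++ [c+1]))
      rw [cfVal_cons a _ h1, cfVal_cons a _ h2, cfVal_merge c l'']

end RCFA
namespace RCFA
open Finset

/-- lower-bound coefficient nonnegativity:
`(a-1+r)·⟪a,k-1⟫ ≤ r·⟪a,k⟫` for `k = r - j`. -/
lemma coeff_lower (a : ℤ) (ha : 1 ≤ a) (r : ℕ) (hr1 : 1 ≤ r) (j : ℕ) :
    0 ≤ (r:ℚ) * imchoose a ((r:ℤ) - j) - ((a:ℚ) - 1 + r) * imchoose a ((r:ℤ) - 1 - j) := by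
  set k : ℤ := (r:ℤ) - j with hk
  have e : (r:ℤ) - 1 - j = k - 1 := by omega
  rw [e]
  rcases lt_trichotomy k 0 with h | h | h
  · rw [imchoose_neg a k h, imchoose_neg a (k-1) (by omega)]
    ring_nf
    exact le_rfl
  · rw [h, imchoose_zero a ha, imchoose_neg a (0-1) (by omega)]
    have : (0:ℚ) ≤ (r:ℚ) := by positivity
    linarith
  · -- 1 ≤ k
    have hkr : k ≤ (r:ℤ) := by omega
    have hratio := imchoose_ratio a ha k
    have hnn := imchoose_nonneg a ha (k - 1)
    have hkq : (0:ℚ) < (k:ℚ) := by exact_mod_cast h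
    have key : (k:ℚ) * (((a:ℚ) - 1 + r) * imchoose a (k-1))
        ≤ (k:ℚ) * ((r:ℚ) * imchoose a k) := by
      have expand : (k:ℚ) * ((r:ℚ) * imchoose a k)
          = (r:ℚ) * (((a:ℚ) + k - 1) * imchoose a (k-1)) := by
        rw [← hratio]; ring
      rw [expand]
      have hfac : (0:ℚ) ≤ (((a:ℚ) - 1) * ((r:ℚ) - (k:ℚ))) * imchoose a (k-1) := by
        apply mul_nonneg
        apply mul_nonneg
        · have : (1:ℚ) ≤ (a:ℚ) := by exact_mod_cast ha
          linarith
        · have : (k:ℚ) ≤ (r:ℚ) := by exact_mod_cast hkr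
          linarith
        · exact hnn
      nlinarith [hfac]
    have := le_of_mul_le_mul_left key hkq
    linarith

/-- partial sums of the upper-bound coefficients. -/
lemma upper_partial (a : ℤ) (ha : 1 ≤ a) (r : ℕ) (hr1 : 1 ≤ r) :
    ∀ t : ℕ, (∑ j ∈ Finset.range (t+1),
        (((a:ℚ) + r) * imchoose a ((r:ℤ) - 1 - j) - (r:ℚ) * imchoose a ((r:ℤ) - j)))
      = (r:ℚ) * imchoose (a+1) ((r:ℤ) - 1 - t) - ((a:ℚ) + r) * imchoose (a+1) ((r:ℤ) - 2 - t) := by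
  have ha1 : (1:ℤ) ≤ a + 1 := by omega
  intro t
  induction t with
  | zero =>
    rw [Finset.sum_range_one]
    have p1 := imchoose_pascal a ha ((r:ℤ) - 1)
    have p2 := imchoose_pascal a ha (r:ℤ)
    have rat := imchoose_ratio (a+1) ha1 (r:ℤ)
    push_cast at rat
    have e1 : (r:ℤ) - 1 - 1 = (r:ℤ) - 2 := by ring
    rw [e1] at p1
    simp only [Nat.cast_zero, sub_zero]
    linear_combination (-((a:ℚ) + r)) * p1 + (r:ℚ) * p2 - rat
  | succ t ih =>
    rw [Finset.sum_range_succ, ih]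
    have p1 := imchoose_pascal a ha ((r:ℤ) - 1 - t)
    have p2 := imchoose_pascal a ha ((r:ℤ) - 2 - t)
    have e1 : (r:ℤ) - 1 - ((t:ℤ)+1) = (r:ℤ) - 2 - t := by ring
    have e2 : (r:ℤ) - ((t:ℤ)+1) = (r:ℤ) - 1 - t := by ring
    have e3 : (r:ℤ) - 1 - t - 1 = (r:ℤ) - 2 - t := by ring
    have e4 : (r:ℤ) - 2 - t - 1 = (r:ℤ) - 2 - ((t+1:ℕ):ℤ) := by push_cast; ring
    have e5 : (r:ℤ) - 1 - ((t+1:ℕ):ℤ) = (r:ℤ) - 2 - t := by push_cast; ring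
    have e6 : (r:ℤ) - ((t+1:ℕ):ℤ) = (r:ℤ) - 1 - t := by push_cast; ring
    rw [e5, e6]
    rw [e3] at p1
    rw [e4] at p2
    linear_combination (r:ℚ) * p1 - ((a:ℚ) + r) * p2

/-- positivity of the partial sums `P_t` for `0 ≤ s = r-1-t ≤ r-1`. -/
lemma upper_P_pos (a : ℤ) (ha : 1 ≤ a) (r : ℕ) (hr1 : 1 ≤ r) (s : ℤ)
    (hs0 : 0 ≤ s) (hsr : s ≤ (r:ℤ) - 1) :
    0 < (r:ℚ) * imchoose (a+1) s - ((a:ℚ) + r) * imchoose (a+1) (s - 1) := by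
  have ha1 : (1:ℤ) ≤ a + 1 := by omega
  rcases eq_or_lt_of_le hs0 with h0 | h1
  · rw [← h0, imchoose_zero (a+1) ha1, imchoose_neg (a+1) (0-1) (by omega)]
    have : (0:ℚ) < (r:ℚ) := by exact_mod_cast hr1
    linarith
  · -- 1 ≤ s
    have rat := imchoose_ratio (a+1) ha1 s
    push_cast at rat
    have hgpos := imchoose_pos (a+1) ha1 s hs0
    have haq : (0:ℚ) < (a:ℚ) := by exact_mod_cast ha
    have hsq : (0:ℚ) < (s:ℚ) := by exact_mod_cast h1
    have hrs : (s:ℚ) < (r:ℚ) := by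
      have : s < (r:ℤ) := by omega
      exact_mod_cast this
    have hase : (0:ℚ) < (a:ℚ) + s := by linarith
    have key : ((a:ℚ) + s) * ((r:ℚ) * imchoose (a+1) s - ((a:ℚ) + r) * imchoose (a+1) (s-1))
        = (a:ℚ) * ((r:ℚ) - s) * imchoose (a+1) s := by
      have : ((a:ℚ) + r) * (((a:ℚ) + s) * imchoose (a+1) (s-1))
          = ((a:ℚ) + r) * ((s:ℚ) * imchoose (a+1) s) := by
        rw [show ((a:ℚ) + s) * imchoose (a+1) (s-1) = (s:ℚ) * imchoose (a+1) s by
          rw [rat]; ring]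
      nlinarith [this]
    have hrhs : 0 < (a:ℚ) * ((r:ℚ) - s) * imchoose (a+1) s := by
      apply mul_pos
      apply mul_pos haq
      linarith
      exact hgpos
    nlinarith [key, hrhs, hase]

end RCFA
namespace RCFA
open Finset

lemma step_main (m : ℕ) (hm : 1 ≤ m) (a : ℤ) (ha : 1 ≤ a) (u : ℕ → ℚ)
    (hupos : ∀ j, j ≤ m → 0 < u j)
    (hudec : ∀ t, t < m → u (t+1) ≤ u t)
    (hu01 : u 1 < u 0)
    (r : ℕ) (hr1 : 1 ≤ r) (hrm : r ≤ m) :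
    ((a:ℚ) - 1 + r) * (∑ j ∈ Finset.range (m+1), imchoose a ((r:ℤ) - 1 - j) * u j)
        < (r:ℚ) * (∑ j ∈ Finset.range (m+1), imchoose a ((r:ℤ) - j) * u j) ∧
    (r:ℚ) * (∑ j ∈ Finset.range (m+1), imchoose a ((r:ℤ) - j) * u j)
        < ((a:ℚ) + r) * (∑ j ∈ Finset.range (m+1), imchoose a ((r:ℤ) - 1 - j) * u j) := by
  constructor
  · -- lower bound
    have expand : (r:ℚ) * (∑ j ∈ Finset.range (m+1), imchoose a ((r:ℤ) - j) * u j)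
        - ((a:ℚ) - 1 + r) * (∑ j ∈ Finset.range (m+1), imchoose a ((r:ℤ) - 1 - j) * u j)
        = ∑ j ∈ Finset.range (m+1),
            ((r:ℚ) * imchoose a ((r:ℤ) - j) - ((a:ℚ) - 1 + r) * imchoose a ((r:ℤ) - 1 - j)) * u j := by
      rw [Finset.mul_sum, Finset.mul_sum, ← Finset.sum_sub_distrib]
      apply Finset.sum_congr rfl
      intro j _
      ring
    have hpos : 0 < ∑ j ∈ Finset.range (m+1),
        ((r:ℚ) * imchoose a ((r:ℤ) - j) - ((a:ℚ) - 1 + r) * imchoose a ((r:ℤ) - 1 - j)) * u j := by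
      apply Finset.sum_pos'
      · intro j hj
        have hjm : j ≤ m := by simpa using Nat.lt_succ_iff.mp (Finset.mem_range.mp hj)
        exact mul_nonneg (coeff_lower a ha r hr1 j) (hupos j hjm).le
      · refine ⟨r, Finset.mem_range.mpr (by omega), ?_⟩
        have e0 : (r:ℤ) - (r:ℕ) = 0 := by ring
        have e1 : (r:ℤ) - 1 - (r:ℕ) = -1 := by ring
        rw [e0, e1, imchoose_zero a ha, imchoose_neg a (-1) (by omega)]
        have : (0:ℚ) < (r:ℚ) := by exact_mod_cast hr1
        have := hupos r hrm
        nlinarith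
    linarith [expand ▸ hpos]
  · -- upper bound
    set d : ℕ → ℚ := fun j => ((a:ℚ) + r) * imchoose a ((r:ℤ) - 1 - j) - (r:ℚ) * imchoose a ((r:ℤ) - j) with hd
    have expand : ((a:ℚ) + r) * (∑ j ∈ Finset.range (m+1), imchoose a ((r:ℤ) - 1 - j) * u j)
        - (r:ℚ) * (∑ j ∈ Finset.range (m+1), imchoose a ((r:ℤ) - j) * u j)
        = ∑ j ∈ Finset.range (m+1), d j * u j := by
      rw [Finset.mul_sum, Finset.mul_sum, ← Finset.sum_sub_distrib]
      apply Finset.sum_congr rfl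
      intro j _
      rw [hd]
      ring
    have habel := abel_sum d u m
    have hPt : ∀ t : ℕ, (∑ j ∈ Finset.range (t+1), d j)
        = (r:ℚ) * imchoose (a+1) ((r:ℤ) - 1 - t) - ((a:ℚ) + r) * imchoose (a+1) ((r:ℤ) - 2 - t) := by
      intro t
      exact upper_partial a ha r hr1 t
    have hPm : (∑ j ∈ Finset.range (m+1), d j) = 0 := by
      rw [hPt m, imchoose_neg (a+1) _ (by omega), imchoose_neg (a+1) _ (by omega)]
      ring
    have hPnonneg : ∀ t, t < m → 0 ≤ (∑ j ∈ Finset.range (t+1), d j) := by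
      intro t ht
      rw [hPt t]
      rcases lt_or_ge ((r:ℤ) - 1 - t) 0 with h | h
      · rw [imchoose_neg (a+1) _ h, imchoose_neg (a+1) _ (by omega)]
        norm_num
      · have := upper_P_pos a ha r hr1 ((r:ℤ) - 1 - t) h (by omega)
        have e : (r:ℤ) - 1 - t - 1 = (r:ℤ) - 2 - t := by ring
        rw [← e]
        linarith
    have hP0 : 0 < (∑ j ∈ Finset.range (0+1), d j) := by
      rw [hPt 0]
      have h0 : (0:ℤ) ≤ (r:ℤ) - 1 - (0:ℕ) := by simp; omega
      have := upper_P_pos a ha r hr1 ((r:ℤ) - 1 - (0:ℕ)) h0 (by simp)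
      have e : (r:ℤ) - 1 - (0:ℕ) - 1 = (r:ℤ) - 2 - (0:ℕ) := by ring
      rw [← e]
      linarith
    have hsum : 0 < ∑ j ∈ Finset.range (m+1), d j * u j := by
      rw [habel, hPm, zero_mul, add_zero]
      apply Finset.sum_pos'
      · intro t ht
        have htm : t < m := Finset.mem_range.mp ht
        exact mul_nonneg (hPnonneg t htm) (by linarith [hudec t htm])
      · refine ⟨0, Finset.mem_range.mpr (by omega), ?_⟩
        exact mul_pos hP0 (by linarith [hu01])
    linarith [expand ▸ hsum]

lemma col_pos (m : ℕ) (a : ℤ) (ha : 1 ≤ a) (u : ℕ → ℚ)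
    (hupos : ∀ j, j ≤ m → 0 < u j) (r : ℕ) (hrm : r ≤ m) :
    0 < ∑ j ∈ Finset.range (m+1), imchoose a ((r:ℤ) - j) * u j := by
  apply Finset.sum_pos'
  · intro j hj
    have hjm : j ≤ m := Nat.lt_succ_iff.mp (Finset.mem_range.mp hj)
    exact mul_nonneg (imchoose_nonneg a ha _) (hupos j hjm).le
  · refine ⟨r, Finset.mem_range.mpr (by omega), ?_⟩
    have e0 : (r:ℤ) - (r:ℕ) = 0 := by ring
    rw [e0, imchoose_zero a ha, one_mul]
    exact hupos r hrm

end RCFA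
namespace RCFA
open Finset

lemma floor_ge_one {y : ℚ} (hy : 1 < y) : (1:ℤ) ≤ ⌊y⌋ :=
  Int.le_floor.mpr (by exact_mod_cast hy.le)

lemma main_inv (m : ℕ) (hm : 1 ≤ m) :
    ∀ l : List ℤ, ∀ hne : l ≠ [], (∀ b ∈ l, 1 ≤ b) → (2 ≤ l.getLast hne) →
    (1 < cfVal l) ∧
    (∀ i, i ≤ m → 0 < wcol m l i) ∧
    (∀ i, 1 ≤ i → i ≤ m →
      ((⌊cfVal l⌋:ℚ) - 1 + i) * wcol m l (i-1) ≤ (i:ℚ) * wcol m l i) ∧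
    (2 ≤ l.length → ∀ i, 1 ≤ i → i ≤ m →
      ((⌊cfVal l⌋:ℚ) - 1 + i) * wcol m l (i-1) < (i:ℚ) * wcol m l i) ∧
    (∀ i, 1 ≤ i → i ≤ m →
      (i:ℚ) * wcol m l i < ((⌊cfVal l⌋:ℚ) + i) * wcol m l (i-1)) := by
  intro l
  induction l with
  | nil => intro hne; exact absurd rfl hne
  | cons a rest ih =>
    intro hne hpos hlast
    have ha : 1 ≤ a := hpos a (List.mem_cons_self (a := a) (l := rest))
    cases rest with
    | nil =>
      -- base case [a], a ≥ 2
      have ha2 : 2 ≤ a := by simpa using hlast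
      have hval : cfVal [a] = (a:ℚ) := cfVal_single a
      have hfl : ⌊cfVal [a]⌋ = a := by rw [hval, Int.floor_intCast]
      have haq : (2:ℚ) ≤ (a:ℚ) := by exact_mod_cast ha2
      refine ⟨by rw [hval]; linarith, ?_, ?_, ?_, ?_⟩
      · intro i hi
        rw [wcol_single m a i hi]
        exact imchoose_pos a ha i (by positivity)
      · intro i hi1 him
        rw [hfl, wcol_single m a i him, wcol_single m a (i-1) (by omega)]
        have rat := imchoose_ratio a ha (i:ℤ)
        have e : ((i:ℤ) - 1) = ((i - 1 : ℕ) : ℤ) := by push_cast [hi1]; omega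
        rw [e] at rat
        push_cast at rat
        linarith [rat]
      · intro hlen; simp at hlen
      · intro i hi1 him
        rw [hfl, wcol_single m a i him, wcol_single m a (i-1) (by omega)]
        have rat := imchoose_ratio a ha (i:ℤ)
        have e : ((i:ℤ) - 1) = ((i - 1 : ℕ) : ℤ) := by push_cast [hi1]; omega
        rw [e] at rat
        push_cast at rat
        have hpos' : 0 < imchoose a ((i-1 : ℕ) : ℤ) := imchoose_pos a ha _ (by positivity)
        linarith [rat, hpos']
    | cons b rest' =>
      -- inductive step: l = a :: t with t = b :: rest'
      set t : List ℤ := b :: rest' with ht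
      have htne : t ≠ [] := by simp [ht]
      have hpos' : ∀ c ∈ t, 1 ≤ c := fun c hc => hpos c (List.mem_cons_of_mem a hc)
      have hlast' : 2 ≤ t.getLast htne := by
        have := List.getLast_cons (l := t) (a := a) htne
        rw [← this]
        exact hlast
      obtain ⟨hy1, hwpos, hlow, hlow', _⟩ := ih htne hpos' hlast'
      set y := cfVal t with hy
      set n' := ⌊y⌋ with hn'
      have hn1 : (1:ℤ) ≤ n' := floor_ge_one hy1
      have hn1q : (1:ℚ) ≤ (n':ℚ) := by exact_mod_cast hn1
      -- the u-vector
      set u : ℕ → ℚ := fun j => wcol m t (m - j) with hu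
      have hupos : ∀ j, j ≤ m → 0 < u j := fun j hj => hwpos (m - j) (by omega)
      have hwmono : ∀ i, 1 ≤ i → i ≤ m → wcol m t (i-1) ≤ wcol m t i := by
        intro i hi1 him
        have h1 := hlow i hi1 him
        have h2 : (i:ℚ) * wcol m t (i-1) ≤ ((n':ℚ) - 1 + i) * wcol m t (i-1) := by
          have := (hwpos (i-1) (by omega)).le
          nlinarith
        have hiq : (0:ℚ) < (i:ℚ) := by exact_mod_cast hi1
        have := le_trans h2 h1
        exact le_of_mul_le_mul_left this hiq
      have hudec : ∀ s, s < m → u (s+1) ≤ u s := by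
        intro s hs
        have e1 : m - (s+1) = (m - s) - 1 := by omega
        show wcol m t (m - (s+1)) ≤ wcol m t (m - s)
        rw [e1]
        exact hwmono (m - s) (by omega) (by omega)
      have hu01 : u 1 < u 0 := by
        show wcol m t (m - 1) < wcol m t (m - 0)
        have e0 : m - 0 = m := by omega
        rw [e0]
        have hkey : (m:ℚ) * wcol m t (m-1) < (m:ℚ) * wcol m t m := by
          rcases rest' with _ | ⟨c, rest''⟩
          · -- t = [b], b ≥ 2, n' = b
            have hb2 : 2 ≤ b := by simpa [ht] using hlast'
            have hnb : n' = b := by rw [hn', hy, ht, cfVal_single, Int.floor_intCast]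
            have h1 := hlow m (by omega) le_rfl
            rw [hnb] at h1
            have hbq : (2:ℚ) ≤ (b:ℚ) := by exact_mod_cast hb2
            have hw1 := hwpos (m-1) (by omega)
            nlinarith
          · -- length t ≥ 2
            have h1 := hlow' (by simp [ht]) m (by omega) le_rfl
            have hw1 := hwpos (m-1) (by omega)
            nlinarith
        have hmq : (0:ℚ) < (m:ℚ) := by exact_mod_cast hm
        exact lt_of_mul_lt_mul_left hkey hmq.le
      -- value and floor of a :: t
      have hvcons : cfVal (a :: t) = (a:ℚ) + 1 / y := cfVal_cons a t htne
      have hy0 : (0:ℚ) < y := by linarith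
      have hinv0 : (0:ℚ) < 1 / y := by positivity
      have hinv1 : 1 / y < 1 := by
        rw [div_lt_one hy0]; linarith
      have hfl : ⌊cfVal (a :: t)⌋ = a := by
        rw [hvcons, Int.floor_intCast_add]
        have : ⌊1 / y⌋ = 0 := by
          apply Int.floor_eq_zero_iff.mpr
          constructor <;> [linarith; linarith]
        omega
      -- expansion of the new column
      have hexp : ∀ r, r ≤ m → wcol m (a :: t) r
          = ∑ j ∈ Finset.range (m+1), imchoose a ((r:ℤ) - j) * u j := by
        intro r hr
        exact wcol_cons m a t r hr
      have hexp' : ∀ r, 1 ≤ r → r ≤ m → wcol m (a :: t) (r-1)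
          = ∑ j ∈ Finset.range (m+1), imchoose a ((r:ℤ) - 1 - j) * u j := by
        intro r hr1 hr
        rw [hexp (r-1) (by omega)]
        apply Finset.sum_congr rfl
        intro j _
        congr 2
        push_cast [hr1]
        omega
      refine ⟨?_, ?_, ?_, ?_, ?_⟩
      · rw [hvcons]
        have : (1:ℚ) ≤ (a:ℚ) := by exact_mod_cast ha
        linarith
      · intro r hr
        rw [hexp r hr]
        exact col_pos m a ha u hupos r hr
      · intro r hr1 hrm
        rw [hfl, hexp r hrm, hexp' r hr1 hrm]
        exact (step_main m hm a ha u hupos hudec hu01 r hr1 hrm).1.le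
      · intro _ r hr1 hrm
        rw [hfl, hexp r hrm, hexp' r hr1 hrm]
        exact (step_main m hm a ha u hupos hudec hu01 r hr1 hrm).1
      · intro r hr1 hrm
        rw [hfl, hexp r hrm, hexp' r hr1 hrm]
        exact (step_main m hm a ha u hupos hudec hu01 r hr1 hrm).2

end RCFA
namespace RCFA

lemma cfVal_int_den (c : ℤ) : (cfVal [c]).den = 1 := by
  rw [cfVal_single]; exact Rat.den_intCast c

lemma normalize (l : List ℤ) (hl : l ≠ []) (hpos : ∀ b ∈ l, 1 ≤ b)
    (hnotint : (cfVal l).den ≠ 1) :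
    ∃ (l₀ : List ℤ) (h₀ : l₀ ≠ []), (∀ b ∈ l₀, 1 ≤ b) ∧ 2 ≤ l₀.getLast h₀ ∧
      cfVal l₀ = cfVal l ∧
      ∀ (m : ℕ) (i : Fin (m+1)), CFmat m l i ⟨0, by omega⟩ = CFmat m l₀ i ⟨0, by omega⟩ := by
  by_cases hL : l.getLast hl = 1
  · -- trailing 1; decompose l = l' ++ [c, 1]
    have hlen2 : 2 ≤ l.length := by
      by_contra h
      push_neg at h
      have h1 : l.length = 1 := by
        have := List.length_pos_iff.mpr hl
        omega
      obtain ⟨c, hc⟩ := List.length_eq_one_iff.mp h1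
      subst hc
      have : c = 1 := by simpa using hL
      subst this
      exact hnotint (cfVal_int_den 1)
    have hd : l.dropLast ≠ [] := by
      have h2 := l.length_dropLast
      intro h
      rw [h] at h2
      simp at h2
      omega
    set c := l.dropLast.getLast hd with hcdef
    have e2 : l.dropLast.dropLast ++ [c] = l.dropLast := List.dropLast_append_getLast hd
    have e1 : l.dropLast ++ [l.getLast hl] = l := List.dropLast_append_getLast hl
    set l' := l.dropLast.dropLast with hl'def
    have hsplit : l = l' ++ [c, 1] := by
      rw [← e1, ← e2, hL, List.append_assoc]
      rfl
    have hc1 : 1 ≤ c := hpos c (by rw [hsplit]; simp)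
    have hl'ne : l' ≠ [] := by
      intro h
      rw [h] at hsplit
      simp at hsplit
      rw [hsplit, show ([c,1] : List ℤ) = [] ++ [c,1] by simp, cfVal_merge c []] at hnotint
      simp only [List.nil_append] at hnotint
      exact hnotint (cfVal_int_den (c+1))
    refine ⟨l' ++ [c+1], by simp, ?_, ?_, ?_, ?_⟩
    · intro b hb
      rcases List.mem_append.mp hb with h | h
      · exact hpos b (by rw [hsplit]; exact List.mem_append.mpr (Or.inl h))
      · have : b = c + 1 := by simpa using h
        omega
    · rw [List.getLast_append_of_ne_nil (l := l') (l' := [c+1]) _ (by simp)]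
      simp only [List.getLast_singleton]
      omega
    · rw [hsplit, cfVal_merge c l']
    · intro m i
      rw [hsplit]
      exact CFmat_merge m l' c hc1 i
  · -- last entry ≥ 2 already
    have h2 : 2 ≤ l.getLast hl := by
      have h1 : 1 ≤ l.getLast hl := hpos _ (List.getLast_mem hl)
      omega
    exact ⟨l, hl, hpos, h2, rfl, fun m i => rfl⟩

end RCFA

/-- Let `x ≥ 1` be a rational number that is not an integer, with `n = ⌊x⌋`.  Then for all
`m ≥ 1` and `1 ≤ i ≤ m`, the strict inequalities
`(n-1+i)/i < r_{i,m}(x)/r_{i-1,m}(x) < (n+i)/i` hold. -/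
theorem rCF_ratio_bounds (m : ℕ) (hm : 1 ≤ m) (x : ℚ) (hx : 1 ≤ x) (hxnotint : x.den ≠ 1)
    (l : List ℤ) (hl : l ≠ []) (hpos : ∀ a ∈ l, 1 ≤ a) (hval : cfVal l = x)
    (i : ℕ) (hi : 1 ≤ i) (him : i ≤ m) :
    ((⌊x⌋ : ℚ) - 1 + i) / i < rCF m l i / rCF m l (i - 1) ∧
    rCF m l i / rCF m l (i - 1) < ((⌊x⌋ : ℚ) + i) / i := by
  classical
  obtain ⟨l₀, h₀, hpos₀, hlast₀, hval₀, hcol⟩ :=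
    RCFA.normalize l hl hpos (by rw [hval]; exact hxnotint)
  have hx₀ : cfVal l₀ = x := by rw [hval₀, hval]
  obtain ⟨hgt1, hwpos, _, hlow', hup⟩ := RCFA.main_inv m hm l₀ h₀ hpos₀ hlast₀
  -- l₀ has length ≥ 2 since x is not an integer
  have hlen2 : 2 ≤ l₀.length := by
    by_contra h
    push_neg at h
    have h1 : l₀.length = 1 := by
      have := List.length_pos_iff.mpr h₀
      omega
    obtain ⟨c, hc⟩ := List.length_eq_one_iff.mp h1
    rw [hc] at hx₀
    rw [RCFA.cfVal_single] at hx₀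
    rw [← hx₀] at hxnotint
    exact hxnotint (Rat.den_intCast c)
  have hfl : ⌊cfVal l₀⌋ = ⌊x⌋ := by rw [hx₀]
  -- rewrite rCF in terms of wcol of l₀
  have hr1 : rCF m l i = RCFA.wcol m l₀ i / RCFA.wcol m l₀ 0 := by
    rw [rCF, RCFA.wcol, RCFA.wcol]
    rw [hcol m ⟨m - i, by omega⟩, hcol m ⟨m, by omega⟩]
    congr 2
  have hr2 : rCF m l (i-1) = RCFA.wcol m l₀ (i-1) / RCFA.wcol m l₀ 0 := by
    rw [rCF, RCFA.wcol, RCFA.wcol]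
    rw [hcol m ⟨m - (i-1), by omega⟩, hcol m ⟨m, by omega⟩]
    congr 2
  have hW0 : 0 < RCFA.wcol m l₀ 0 := hwpos 0 (by omega)
  have hWi : 0 < RCFA.wcol m l₀ i := hwpos i him
  have hWi1 : 0 < RCFA.wcol m l₀ (i-1) := hwpos (i-1) (by omega)
  have hratio : rCF m l i / rCF m l (i-1) = RCFA.wcol m l₀ i / RCFA.wcol m l₀ (i-1) := by
    rw [hr1, hr2]
    field_simp
  have hiq : (0:ℚ) < (i:ℚ) := by exact_mod_cast hi
  have hlower := hlow' hlen2 i hi him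
  have hupper := hup i hi him
  rw [hfl] at hlower hupper
  constructor
  · rw [hratio, div_lt_div_iff₀ hiq hWi1]
    linarith [hlower]
  · rw [hratio, div_lt_div_iff₀ hWi1 hiq]
    linarith [hupper]
end

section
/- For rational numbers 1 ≤ x < y and each 1 ≤ i ≤ m, the ratio maps satisfy r_{i,m}(x)/r_{i-1,m}(x) < r_{i,m}(y)/r_{i-1,m}(y); i.e., each map x ↦ r_{i,m}(x)/r_{i-1,m}(x) is strictly increasing on [1, ∞). -/
open scoped BigOperators

lemma imchoose_neg (a r : ℤ) (h : r < 0) : imchoose a r = 0 := by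
  simp [imchoose, ichoose, h]

lemma imchoose_zero (a : ℤ) : imchoose a 0 = 1 := by
  simp [imchoose, ichoose]

lemma imchoose_pos (a : ℤ) (ha : 1 ≤ a) (r : ℤ) (hr : 0 ≤ r) : 0 < imchoose a r := by
  unfold imchoose ichoose
  rw [if_neg (by omega)]
  apply div_pos
  · apply Finset.prod_pos
    intro i hi
    simp only [Finset.mem_range] at hi
    have h1 : (i : ℤ) < r := by omega
    have : (0:ℤ) < a + r - 1 - i := by omega
    have h2 : ((a + r - 1 : ℤ) : ℚ) - i > 0 := by
      have h3 : ((0:ℤ):ℚ) < ((a + r - 1 - i : ℤ) : ℚ) := Int.cast_lt.mpr this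
      push_cast at h3 ⊢
      linarith
    linarith
  · exact_mod_cast Nat.factorial_pos r.toNat

lemma imchoose_nonneg (a : ℤ) (ha : 1 ≤ a) (r : ℤ) : 0 ≤ imchoose a r := by
  rcases lt_or_ge r 0 with h | h
  · rw [imchoose_neg a r h]
  · exact (imchoose_pos a ha r h).le

lemma imchoose_succ (a r : ℤ) (hr : 0 ≤ r) :
    imchoose a (r+1) * (r+1) = imchoose a r * (a + r) := by
  unfold imchoose ichoose
  rw [if_neg (by omega), if_neg (by omega)]
  have h1 : (r+1).toNat = r.toNat + 1 := by omega
  rw [h1, Nat.factorial_succ, Finset.prod_range_succ']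
  have hr' : ((r.toNat : ℤ) : ℚ) = (r : ℚ) := by
    rw [Int.toNat_of_nonneg hr]
  have e1 : ∀ i ∈ Finset.range r.toNat, ((a + (r+1) - 1 : ℤ) : ℚ) - (i+1 : ℕ) = ((a + r - 1 : ℤ):ℚ) - i := by
    intro i _
    push_cast
    ring
  rw [Finset.prod_congr rfl e1]
  have hfac : (0:ℚ) < (r.toNat.factorial : ℚ) := by exact_mod_cast Nat.factorial_pos _
  have hr1 : ((r.toNat:ℚ) + 1) = (r:ℚ) + 1 := by
    rw [show ((r.toNat:ℚ)) = ((r.toNat : ℤ):ℚ) by push_cast; ring, hr']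
  field_simp
  push_cast
  rw [hr1]
  ring

lemma imchoose_one_nat (r : ℕ) : imchoose 1 (r:ℤ) = 1 := by
  induction r with
  | zero => exact imchoose_zero 1
  | succ n ih =>
    have h := imchoose_succ 1 (n:ℤ) (by positivity)
    rw [ih] at h
    have hn1 : ((n:ℤ):ℚ) + 1 ≠ 0 := by positivity
    have h2 : imchoose 1 ((n:ℤ)+1) * (((n:ℤ):ℚ)+1) = 1 * (((n:ℤ):ℚ)+1) := by
      push_cast at h ⊢; linarith
    have h3 := mul_right_cancel₀ hn1 h2
    rw [show ((n+1:ℕ) : ℤ) = (n:ℤ)+1 by push_cast; ring]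
    exact h3

lemma imchoose_one (r : ℤ) (hr : 0 ≤ r) : imchoose 1 r = 1 := by
  have := imchoose_one_nat r.toNat
  rwa [Int.toNat_of_nonneg hr] at this

lemma lc_step (a : ℤ) (ha : 1 ≤ a) (s s' : ℤ) (h : s ≤ s') :
    imchoose a s * imchoose a (s'+1) ≤ imchoose a (s+1) * imchoose a s' := by
  rcases lt_or_ge s 0 with hs | hs
  · rw [imchoose_neg a s hs, zero_mul]
    exact mul_nonneg (imchoose_nonneg _ ha _) (imchoose_nonneg _ ha _)
  · have hs' : 0 ≤ s' := le_trans hs h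
    have r1 := imchoose_succ a s hs
    have r2 := imchoose_succ a s' hs'
    have p1 := imchoose_pos a ha s hs
    have p2 := imchoose_pos a ha s' hs'
    push_cast at r1 r2
    have q1 : (0:ℚ) < (s:ℚ)+1 := by
      have : (0:ℚ) ≤ (s:ℚ) := by exact_mod_cast hs
      linarith
    have q2 : (0:ℚ) < (s':ℚ)+1 := by
      have : (0:ℚ) ≤ (s':ℚ) := by exact_mod_cast hs'
      linarith
    have key : ((a:ℚ)+s')*((s:ℚ)+1) ≤ ((a:ℚ)+s)*((s':ℚ)+1) := by
      have ha' : (1:ℚ) ≤ (a:ℚ) := by exact_mod_cast ha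
      have hss : (s:ℚ) ≤ (s':ℚ) := by exact_mod_cast h
      nlinarith
    have h1 : imchoose a s * imchoose a (s'+1) * (((s:ℚ)+1)*((s':ℚ)+1))
        = imchoose a s * imchoose a s' * (((a:ℚ)+s')*((s:ℚ)+1)) := by
      linear_combination (imchoose a s * ((s:ℚ)+1)) * r2
    have h2 : imchoose a (s+1) * imchoose a s' * (((s:ℚ)+1)*((s':ℚ)+1))
        = imchoose a s * imchoose a s' * (((a:ℚ)+s)*((s':ℚ)+1)) := by
      linear_combination (imchoose a s' * ((s':ℚ)+1)) * r1
    have h3 : imchoose a s * imchoose a (s'+1) * (((s:ℚ)+1)*((s':ℚ)+1))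
        ≤ imchoose a (s+1) * imchoose a s' * (((s:ℚ)+1)*((s':ℚ)+1)) := by
      rw [h1, h2]
      exact mul_le_mul_of_nonneg_left key (mul_nonneg p1.le p2.le)
    exact le_of_mul_le_mul_right h3 (mul_pos q1 q2)

lemma lc2 (a : ℤ) (ha : 1 ≤ a) : ∀ (p q : ℕ), p ≤ q → ∀ u : ℤ,
    imchoose a u * imchoose a (u + p + q) ≤ imchoose a (u + p) * imchoose a (u + q) := by
  intro p
  induction p with
  | zero => intro q _ u; push_cast; ring_nf; exact le_refl _
  | succ n ih =>
    intro q hq u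
    have hq1 : 1 ≤ q := by omega
    have h1 : imchoose a u * imchoose a (u + (n+1:ℕ) + q) ≤
        imchoose a (u+1) * imchoose a (u + n + q) := by
      have := lc_step a ha u (u + n + q) (by omega)
      have e : u + ((n:ℤ)+1) + q = (u + n + q) + 1 := by ring
      push_cast
      rw [e]
      exact this
    have h2 : imchoose a (u+1) * imchoose a ((u+1) + n + (q-1:ℕ)) ≤
        imchoose a ((u+1) + n) * imchoose a ((u+1) + (q-1:ℕ)) := ih (q-1) (by omega) (u+1)
    have e2 : ((u:ℤ)+1) + n + ((q-1:ℕ):ℤ) = u + n + q := by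
      have : ((q-1:ℕ):ℤ) = (q:ℤ) - 1 := by omega
      rw [this]; ring
    have e3 : ((u:ℤ)+1) + ((q-1:ℕ):ℤ) = u + q := by
      have : ((q-1:ℕ):ℤ) = (q:ℤ) - 1 := by omega
      rw [this]; ring
    rw [e2, e3] at h2
    calc imchoose a u * imchoose a (u + (n+1:ℕ) + q)
        ≤ imchoose a (u+1) * imchoose a (u + n + q) := h1
      _ ≤ imchoose a ((u+1) + n) * imchoose a (u + q) := h2
      _ = imchoose a (u + (n+1:ℕ)) * imchoose a (u + q) := by
          push_cast; ring_nf

lemma lc3 (a : ℤ) (ha : 1 ≤ a) (u p q : ℤ) (hp : 0 ≤ p) (hq : 0 ≤ q) :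
    imchoose a u * imchoose a (u + p + q) ≤ imchoose a (u + p) * imchoose a (u + q) := by
  rcases le_total p q with h | h
  · have := lc2 a ha p.toNat q.toNat (by omega) u
    rwa [Int.toNat_of_nonneg hp, Int.toNat_of_nonneg hq] at this
  · have := lc2 a ha q.toNat p.toNat (by omega) u
    rw [Int.toNat_of_nonneg hp, Int.toNat_of_nonneg hq] at this
    calc imchoose a u * imchoose a (u + p + q)
        = imchoose a u * imchoose a (u + q + p) := by ring_nf
      _ ≤ imchoose a (u + q) * imchoose a (u + p) := this
      _ = imchoose a (u + p) * imchoose a (u + q) := by ring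

lemma kernel_le (a : ℤ) (ha : 1 ≤ a) (M i i' κ lam : ℤ) (hii : i ≤ i') (hkl : κ ≤ lam) :
    imchoose a (M - i - κ) * imchoose a (M - i' - lam) ≤
    imchoose a (M - i' - κ) * imchoose a (M - i - lam) := by
  have := lc3 a ha (M - i' - lam) (i' - i) (lam - κ) (by omega) (by omega)
  have e1 : M - i' - lam + (i' - i) + (lam - κ) = M - i - κ := by ring
  have e2 : M - i' - lam + (i' - i) = M - i - lam := by ring
  have e3 : M - i' - lam + (lam - κ) = M - i' - κ := by ring
  rw [e1, e2, e3] at this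
  calc imchoose a (M - i - κ) * imchoose a (M - i' - lam)
      = imchoose a (M - i' - lam) * imchoose a (M - i - κ) := by ring
    _ ≤ imchoose a (M - i - lam) * imchoose a (M - i' - κ) := this
    _ = imchoose a (M - i' - κ) * imchoose a (M - i - lam) := by ring

lemma imchoose_ratio (b : ℤ) : ∀ n : ℕ,
    imchoose (b+1) (n:ℤ) * (b:ℚ) = imchoose b (n:ℤ) * ((b:ℚ)+(n:ℚ)) := by
  intro n
  induction n with
  | zero => simp [imchoose_zero]
  | succ n ih =>
    have r1 := imchoose_succ (b+1) (n:ℤ) (by positivity)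
    have r2 := imchoose_succ b (n:ℤ) (by positivity)
    push_cast at r1 r2 ⊢
    have hn1 : ((n:ℚ)+1) ≠ 0 := by positivity
    apply mul_right_cancel₀ hn1
    linear_combination (b:ℚ) * r1 - ((b:ℚ)+(n:ℚ)+1) * r2 + ((b:ℚ)+1+(n:ℚ)) * ih

lemma imchoose_pascal (b : ℤ) (n : ℕ) :
    imchoose (b+1) ((n:ℤ)+1) = imchoose (b+1) (n:ℤ) + imchoose b ((n:ℤ)+1) := by
  have r1 := imchoose_succ (b+1) (n:ℤ) (by positivity)
  have r2 := imchoose_succ b (n:ℤ) (by positivity)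
  have hr := imchoose_ratio b n
  push_cast at r1 r2 ⊢
  have hn1 : ((n:ℚ)+1) ≠ 0 := by positivity
  apply mul_right_cancel₀ hn1
  linear_combination r1 - r2 + hr

lemma hockey (b : ℤ) (n : ℕ) :
    ∑ s ∈ Finset.range (n+1), imchoose b (s:ℤ) = imchoose (b+1) (n:ℤ) := by
  induction n with
  | zero => simp [imchoose_zero]
  | succ n ih =>
    rw [Finset.sum_range_succ, ih]
    have := imchoose_pascal b n
    push_cast
    push_cast at this
    linarith

lemma strict_step (a b s : ℤ) (hb : 1 ≤ b) (hba : b < a) (hs : 0 ≤ s) :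
    imchoose a s * imchoose b (s+1) < imchoose a (s+1) * imchoose b s := by
  have ha : 1 ≤ a := by omega
  have r1 := imchoose_succ a s hs
  have r2 := imchoose_succ b s hs
  have pa := imchoose_pos a ha s hs
  have pb := imchoose_pos b hb s hs
  push_cast at r1 r2
  have q1 : (0:ℚ) < (s:ℚ)+1 := by
    have : (0:ℚ) ≤ (s:ℚ) := by exact_mod_cast hs
    linarith
  have h1 : imchoose a s * imchoose b (s+1) * ((s:ℚ)+1)
      = imchoose a s * imchoose b s * ((b:ℚ)+(s:ℚ)) := by
    linear_combination (imchoose a s) * r2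
  have h2 : imchoose a (s+1) * imchoose b s * ((s:ℚ)+1)
      = imchoose a s * imchoose b s * ((a:ℚ)+(s:ℚ)) := by
    linear_combination (imchoose b s) * r1
  have key : imchoose a s * imchoose b s * ((b:ℚ)+(s:ℚ))
      < imchoose a s * imchoose b s * ((a:ℚ)+(s:ℚ)) := by
    have hlt : ((b:ℚ)+(s:ℚ)) < ((a:ℚ)+(s:ℚ)) := by
      have : (b:ℚ) < (a:ℚ) := by exact_mod_cast hba
      linarith
    exact mul_lt_mul_of_pos_left hlt (mul_pos pa pb)
  have h3 : imchoose a s * imchoose b (s+1) * ((s:ℚ)+1)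
      < imchoose a (s+1) * imchoose b s * ((s:ℚ)+1) := by rw [h1, h2]; exact key
  exact lt_of_mul_lt_mul_right h3 q1.le

lemma ratio_int_aux (a b : ℤ) (hb : 1 ≤ b) (hba : b < a) : ∀ (d : ℕ) (s : ℤ), 0 ≤ s →
    imchoose a s * imchoose b (s+1+d) < imchoose a (s+1+d) * imchoose b s := by
  have ha : 1 ≤ a := by omega
  intro d
  induction d with
  | zero =>
    intro s hs
    simpa using strict_step a b s hb hba hs
  | succ n ih =>
    intro s hs
    set t : ℤ := s + 1 + n with ht
    have hts : 0 ≤ t := by omega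
    have IH := ih s hs
    have st := strict_step a b t hb hba hts
    have pa_s := imchoose_pos a ha s hs
    have pb_s := imchoose_pos b hb s hs
    have pa_t := imchoose_pos a ha t hts
    have pb_t := imchoose_pos b hb t hts
    have pa_t1 := imchoose_pos a ha (t+1) (by omega)
    have pb_t1 := imchoose_pos b hb (t+1) (by omega)
    have big : (imchoose a s * imchoose b t) * (imchoose a t * imchoose b (t+1))
        < (imchoose a t * imchoose b s) * (imchoose a (t+1) * imchoose b t) :=
      mul_lt_mul'' IH st (by positivity) (by positivity)
    have m1 : (imchoose a s * imchoose b (t+1)) * (imchoose a t * imchoose b t)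
        = (imchoose a s * imchoose b t) * (imchoose a t * imchoose b (t+1)) := by ring
    have m2 : (imchoose a (t+1) * imchoose b s) * (imchoose a t * imchoose b t)
        = (imchoose a t * imchoose b s) * (imchoose a (t+1) * imchoose b t) := by ring
    have h4 : (imchoose a s * imchoose b (t+1)) * (imchoose a t * imchoose b t)
        < (imchoose a (t+1) * imchoose b s) * (imchoose a t * imchoose b t) := by
      rw [m1, m2]; exact big
    have h5 := lt_of_mul_lt_mul_right h4 (le_of_lt (by positivity))
    rw [show ((n+1:ℕ):ℤ) = (n:ℤ)+1 by push_cast; ring,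
       show s + 1 + ((n:ℤ)+1) = t + 1 by omega]
    exact h5

lemma ratio_int (a b : ℤ) (hb : 1 ≤ b) (hba : b < a) (s t : ℤ) (hs : 0 ≤ s) (hst : s < t) :
    imchoose a s * imchoose b t < imchoose a t * imchoose b s := by
  have := ratio_int_aux a b hb hba (t - s - 1).toNat s hs
  rw [show s + 1 + ((t-s-1).toNat : ℤ) = t by omega] at this
  exact this

def fc (m : ℕ) (l : List ℤ) : Fin (m+1) → ℚ := fun i => CFmat m l i ⟨0, by omega⟩

def app (m : ℕ) (a : ℤ) (V : Fin (m+1) → ℚ) : Fin (m+1) → ℚ :=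
  fun i => ∑ κ : Fin (m+1), imchoose a ((m:ℤ) - (i:ℕ) - (κ:ℕ)) * V κ

lemma fc_cons (m : ℕ) (a : ℤ) (l : List ℤ) : fc m (a::l) = app m a (fc m l) := by
  funext i
  show CFmat m (a::l) i ⟨0, by omega⟩ = _
  unfold CFmat
  rw [List.map_cons, List.prod_cons, Matrix.mul_apply]
  rfl

lemma fc_nil (m : ℕ) (i : Fin (m+1)) : fc m [] i = if i = ⟨0, by omega⟩ then 1 else 0 := by
  show CFmat m [] i ⟨0, by omega⟩ = _
  unfold CFmat
  rw [List.map_nil, List.prod_nil, Matrix.one_apply]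

lemma fc_nil_nonneg (m : ℕ) (i : Fin (m+1)) : 0 ≤ fc m [] i := by
  rw [fc_nil]; split <;> norm_num

lemma fc_nil_zero (m : ℕ) : fc m [] ⟨0, by omega⟩ = 1 := by
  rw [fc_nil]; simp

lemma app_pos (m : ℕ) (a : ℤ) (ha : 1 ≤ a) (V : Fin (m+1) → ℚ)
    (hV : ∀ κ, 0 ≤ V κ) (hV0 : 0 < V ⟨0, by omega⟩) (i : Fin (m+1)) : 0 < app m a V i := by
  unfold app
  apply Finset.sum_pos'
  · intro κ _
    exact mul_nonneg (imchoose_nonneg a ha _) (hV κ)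
  · refine ⟨⟨0, by omega⟩, Finset.mem_univ _, ?_⟩
    apply mul_pos _ hV0
    apply imchoose_pos a ha
    have := i.isLt
    simp only []
    omega

lemma fc_pos (m : ℕ) (l : List ℤ) (hl : l ≠ []) (hpos : ∀ x ∈ l, 1 ≤ x) (i : Fin (m+1)) :
    0 < fc m l i := by
  induction l generalizing i with
  | nil => exact absurd rfl hl
  | cons a t ih =>
    have ha : 1 ≤ a := hpos a (by simp)
    rw [fc_cons]
    rcases eq_or_ne t [] with rfl | ht
    · exact app_pos m a ha _ (fc_nil_nonneg m) (by rw [fc_nil_zero]; norm_num) i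
    · exact app_pos m a ha _ (fun κ => (ih ht (fun x hx => hpos x (by simp [hx])) κ).le)
        (ih ht (fun x hx => hpos x (by simp [hx])) _) i

def LRlt (m : ℕ) (D E : Fin (m+1) → ℚ) : Prop :=
  ∀ i i' : Fin (m+1), i < i' → D i' * E i < D i * E i'

def LRle (m : ℕ) (D E : Fin (m+1) → ℚ) : Prop :=
  ∀ i i' : Fin (m+1), i < i' → D i' * E i ≤ D i * E i'

lemma LRlt.le {m : ℕ} {D E : Fin (m+1) → ℚ} (h : LRlt m D E) : LRle m D E :=
  fun i i' hi => (h i i' hi).le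

lemma LRle_refl (m : ℕ) (D : Fin (m+1) → ℚ) : LRle m D D :=
  fun i i' _ => le_of_eq (mul_comm _ _)

lemma LR_lt_le {m : ℕ} {A B C : Fin (m+1) → ℚ} (hA : ∀ i, 0 < A i) (hB : ∀ i, 0 < B i)
    (hC : ∀ i, 0 < C i) (h1 : LRlt m A B) (h2 : LRle m B C) : LRlt m A C := by
  intro i i' h
  have key : (A i' * C i) * (B i * B i') < (A i * C i') * (B i * B i') := by
    calc (A i' * C i) * (B i * B i') = (A i' * B i) * (B i' * C i) := by ring
      _ ≤ (A i' * B i) * (B i * C i') :=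
          mul_le_mul_of_nonneg_left (h2 i i' h) (mul_nonneg (hA i').le (hB i).le)
      _ < (A i * B i') * (B i * C i') :=
          mul_lt_mul_of_pos_right (h1 i i' h) (mul_pos (hB i) (hC i'))
      _ = (A i * C i') * (B i * B i') := by ring
  exact lt_of_mul_lt_mul_right key (mul_pos (hB i) (hB i')).le

lemma LR_le_lt {m : ℕ} {A B C : Fin (m+1) → ℚ} (hA : ∀ i, 0 < A i) (hB : ∀ i, 0 < B i)
    (hC : ∀ i, 0 < C i) (h1 : LRle m A B) (h2 : LRlt m B C) : LRlt m A C := by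
  intro i i' h
  have key : (A i' * C i) * (B i * B i') < (A i * C i') * (B i * B i') := by
    calc (A i' * C i) * (B i * B i') = (A i' * B i) * (B i' * C i) := by ring
      _ < (A i' * B i) * (B i * C i') := by
          exact mul_lt_mul_of_pos_left (h2 i i' h) (mul_pos (hA i') (hB i))
      _ ≤ (A i * B i') * (B i * C i') :=
          mul_le_mul_of_nonneg_right (h1 i i' h) (mul_nonneg (hB i).le (hC i').le)
      _ = (A i * C i') * (B i * B i') := by ring
  exact lt_of_mul_lt_mul_right key (mul_pos (hB i) (hB i')).le

lemma transfer (m : ℕ) (a : ℤ) (ha : 1 ≤ a) (D E : Fin (m+1) → ℚ)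
    (hDnn : ∀ κ, 0 ≤ D κ) (hD0 : 0 < D ⟨0, by omega⟩) (hE : ∀ κ, 0 < E κ)
    (hweak : ∀ κ lam : Fin (m+1), κ < lam → D lam * E κ ≤ D κ * E lam)
    (hstrict : ∀ lam : Fin (m+1), (⟨0, by omega⟩ : Fin (m+1)) < lam →
      D lam * E ⟨0, by omega⟩ < D ⟨0, by omega⟩ * E lam) :
    LRlt m (app m a E) (app m a D) := by
  intro i i' hii
  set T : Fin (m+1) → Fin (m+1) → ℚ := fun κ lam =>
    (imchoose a ((m:ℤ) - (i:ℕ) - (κ:ℕ)) * E κ) * (imchoose a ((m:ℤ) - (i':ℕ) - (lam:ℕ)) * D lam)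
    - (imchoose a ((m:ℤ) - (i':ℕ) - (κ:ℕ)) * E κ) * (imchoose a ((m:ℤ) - (i:ℕ) - (lam:ℕ)) * D lam)
    with hT
  set F : Fin (m+1) → Fin (m+1) → ℚ := fun κ lam =>
    (imchoose a ((m:ℤ) - (i:ℕ) - (κ:ℕ)) * imchoose a ((m:ℤ) - (i':ℕ) - (lam:ℕ))
      - imchoose a ((m:ℤ) - (i':ℕ) - (κ:ℕ)) * imchoose a ((m:ℤ) - (i:ℕ) - (lam:ℕ)))
    * (E κ * D lam - E lam * D κ) with hF
  have hexp : app m a E i * app m a D i' - app m a E i' * app m a D i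
      = ∑ κ : Fin (m+1), ∑ lam : Fin (m+1), T κ lam := by
    unfold app
    rw [Finset.sum_mul_sum, Finset.sum_mul_sum, ← Finset.sum_sub_distrib]
    apply Finset.sum_congr rfl
    intro κ _
    rw [← Finset.sum_sub_distrib]
  have hswap : ∑ κ : Fin (m+1), ∑ lam : Fin (m+1), T lam κ
      = ∑ κ : Fin (m+1), ∑ lam : Fin (m+1), T κ lam := Finset.sum_comm
  have h2S : (app m a E i * app m a D i' - app m a E i' * app m a D i)
      + (app m a E i * app m a D i' - app m a E i' * app m a D i)
      = ∑ κ : Fin (m+1), ∑ lam : Fin (m+1), F κ lam := by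
    rw [hexp]
    nth_rewrite 2 [← hswap]
    rw [← Finset.sum_add_distrib]
    apply Finset.sum_congr rfl
    intro κ _
    rw [← Finset.sum_add_distrib]
    apply Finset.sum_congr rfl
    intro lam _
    simp only [hT, hF]
    generalize imchoose a ((m:ℤ) - (i:ℕ) - (κ:ℕ)) = p1
    generalize imchoose a ((m:ℤ) - (i':ℕ) - (κ:ℕ)) = q1
    generalize imchoose a ((m:ℤ) - (i:ℕ) - (lam:ℕ)) = p2
    generalize imchoose a ((m:ℤ) - (i':ℕ) - (lam:ℕ)) = q2
    ring
  have hkernel : ∀ κ lam : Fin (m+1), κ ≤ lam →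
      imchoose a ((m:ℤ) - (i:ℕ) - (κ:ℕ)) * imchoose a ((m:ℤ) - (i':ℕ) - (lam:ℕ))
      ≤ imchoose a ((m:ℤ) - (i':ℕ) - (κ:ℕ)) * imchoose a ((m:ℤ) - (i:ℕ) - (lam:ℕ)) := by
    intro κ lam hkl
    exact kernel_le a ha (m:ℤ) (i:ℕ) (i':ℕ) (κ:ℕ) (lam:ℕ)
      (by exact_mod_cast Int.ofNat_le.mpr (le_of_lt hii)) (by exact_mod_cast Int.ofNat_le.mpr hkl)
  have hFnn : ∀ κ lam : Fin (m+1), 0 ≤ F κ lam := by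
    intro κ lam
    rcases lt_trichotomy κ lam with h | h | h
    · have hk := hkernel κ lam h.le
      have hw : E κ * D lam - E lam * D κ ≤ 0 := by
        have := hweak κ lam h
        nlinarith
      simp only [hF]
      have h9 := mul_nonneg (by linarith :
          (0:ℚ) ≤ imchoose a ((m:ℤ) - (i':ℕ) - (κ:ℕ)) * imchoose a ((m:ℤ) - (i:ℕ) - (lam:ℕ))
          - imchoose a ((m:ℤ) - (i:ℕ) - (κ:ℕ)) * imchoose a ((m:ℤ) - (i':ℕ) - (lam:ℕ)))
        (by linarith : (0:ℚ) ≤ -(E κ * D lam - E lam * D κ))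
      nlinarith [h9]
    · subst h
      simp only [hF]
      have : E κ * D κ - E κ * D κ = 0 := by ring
      rw [this, mul_zero]
    · have hk := hkernel lam κ h.le
      have hw : 0 ≤ E κ * D lam - E lam * D κ := by
        have := hweak lam κ h
        nlinarith
      simp only [hF]
      exact mul_nonneg (by linarith) hw
  -- strict term
  have hiival : (i:ℕ) < (i':ℕ) := hii
  have hi'le : (i':ℕ) ≤ m := by omega
  have hile : (i:ℕ) ≤ m := by omega
  set κ₀ : Fin (m+1) := ⟨0, by omega⟩ with hκ₀
  set lam₀ : Fin (m+1) := ⟨m - (i':ℕ) + 1, by omega⟩ with hlam₀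
  have hcast : ((m - (i':ℕ) + 1 : ℕ) : ℤ) = (m:ℤ) - (i':ℕ) + 1 := by omega
  have hA2 : imchoose a ((m:ℤ) - (i':ℕ) - ((lam₀:ℕ))) = 0 := by
    apply imchoose_neg
    show (m:ℤ) - (i':ℕ) - ((m - (i':ℕ) + 1 : ℕ) : ℤ) < 0
    omega
  have hB1 : 0 < imchoose a ((m:ℤ) - (i':ℕ) - ((κ₀:ℕ))) := by
    apply imchoose_pos a ha
    show (0:ℤ) ≤ (m:ℤ) - (i':ℕ) - ((0:ℕ):ℤ)
    omega
  have hB2 : 0 < imchoose a ((m:ℤ) - (i:ℕ) - ((lam₀:ℕ))) := by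
    apply imchoose_pos a ha
    show (0:ℤ) ≤ (m:ℤ) - (i:ℕ) - ((m - (i':ℕ) + 1 : ℕ) : ℤ)
    omega
  have hwstrict : E κ₀ * D lam₀ - E lam₀ * D κ₀ < 0 := by
    have := hstrict lam₀ (by
      show (0:ℕ) < m - (i':ℕ) + 1
      omega)
    nlinarith
  have hF0 : 0 < F κ₀ lam₀ := by
    rw [hF]
    apply mul_pos_of_neg_of_neg
    · have : imchoose a ((m:ℤ) - (i:ℕ) - ((κ₀:ℕ))) * imchoose a ((m:ℤ) - (i':ℕ) - ((lam₀:ℕ)))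
          = 0 := by rw [hA2]; ring
      rw [this]
      have := mul_pos hB1 hB2
      linarith
    · exact hwstrict
  have hsum : 0 < ∑ κ : Fin (m+1), ∑ lam : Fin (m+1), F κ lam := by
    apply Finset.sum_pos'
    · intro κ _
      exact Finset.sum_nonneg fun lam _ => hFnn κ lam
    · exact ⟨κ₀, Finset.mem_univ _,
        Finset.sum_pos' (fun lam _ => hFnn κ₀ lam) ⟨lam₀, Finset.mem_univ _, hF0⟩⟩
  rw [← h2S] at hsum
  linarith

lemma LR_le_le {m : ℕ} {A B C : Fin (m+1) → ℚ} (hA : ∀ i, 0 < A i) (hB : ∀ i, 0 < B i)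
    (hC : ∀ i, 0 < C i) (h1 : LRle m A B) (h2 : LRle m B C) : LRle m A C := by
  intro i i' h
  have key : (A i' * C i) * (B i * B i') ≤ (A i * C i') * (B i * B i') := by
    calc (A i' * C i) * (B i * B i') = (A i' * B i) * (B i' * C i) := by ring
      _ ≤ (A i' * B i) * (B i * C i') :=
          mul_le_mul_of_nonneg_left (h2 i i' h) (mul_nonneg (hA i').le (hB i).le)
      _ ≤ (A i * B i') * (B i * C i') :=
          mul_le_mul_of_nonneg_right (h1 i i' h) (mul_nonneg (hB i).le (hC i').le)
      _ = (A i * C i') * (B i * B i') := by ring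
  exact le_of_mul_le_mul_right key (mul_pos (hB i) (hB i'))

lemma fc_single (m : ℕ) (a : ℤ) (i : Fin (m+1)) :
    fc m [a] i = imchoose a ((m:ℤ) - (i:ℕ)) := by
  rw [fc_cons]
  unfold app
  rw [Finset.sum_eq_single (⟨0, by omega⟩ : Fin (m+1))]
  · rw [fc_nil_zero]
    simp
  · intro κ _ hκ
    rw [fc_nil, if_neg hκ, mul_zero]
  · intro h
    exact absurd (Finset.mem_univ _) h

lemma fc_single_pos (m : ℕ) (a : ℤ) (ha : 1 ≤ a) (i : Fin (m+1)) : 0 < fc m [a] i :=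
  fc_pos m [a] (by simp) (by simpa using ha) i

lemma intLR (m : ℕ) (a b : ℤ) (hb : 1 ≤ b) (hba : b < a) :
    LRlt m (fc m [a]) (fc m [b]) := by
  intro i i' h
  rw [fc_single, fc_single, fc_single, fc_single]
  have hi : (i:ℕ) < (i':ℕ) := h
  have hi' : (i':ℕ) ≤ m := by omega
  exact ratio_int a b hb hba ((m:ℤ) - (i':ℕ)) ((m:ℤ) - (i:ℕ)) (by omega) (by omega)

lemma fc_one (m : ℕ) (κ : Fin (m+1)) : fc m [1] κ = 1 := by
  rw [fc_single]
  apply imchoose_one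
  have := κ.isLt
  omega

lemma fc_id (m : ℕ) (b : ℤ) : fc m [b, 1] = fc m [b+1] := by
  funext i
  have him : (i:ℕ) ≤ m := by have := i.isLt; omega
  set n : ℕ := m - (i:ℕ) with hn
  rw [fc_cons]
  unfold app
  have e1 : ∀ κ : Fin (m+1), imchoose b ((m:ℤ) - (i:ℕ) - (κ:ℕ)) * fc m [1] κ
      = imchoose b ((m:ℤ) - (i:ℕ) - (κ:ℕ)) := by
    intro κ
    rw [fc_one, mul_one]
  rw [Finset.sum_congr rfl (fun κ _ => e1 κ)]
  rw [Fin.sum_univ_eq_sum_range (fun k => imchoose b ((m:ℤ) - (i:ℕ) - (k:ℕ)))]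
  rw [← Finset.sum_subset (Finset.range_subset_range.mpr (show n+1 ≤ m+1 by omega))
    (by
      intro k hk hk2
      simp only [Finset.mem_range] at hk hk2
      apply imchoose_neg
      omega)]
  have e2 : ∀ k ∈ Finset.range (n+1), imchoose b ((m:ℤ) - (i:ℕ) - (k:ℕ))
      = (fun j : ℕ => imchoose b (j:ℤ)) (n - k) := by
    intro k hk
    simp only [Finset.mem_range] at hk
    congr 1
    omega
  rw [Finset.sum_congr rfl e2]
  rw [show ∑ k ∈ Finset.range (n+1), (fun j : ℕ => imchoose b (j:ℤ)) (n - k)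
      = ∑ k ∈ Finset.range (n+1), (fun j : ℕ => imchoose b (j:ℤ)) (n + 1 - 1 - k) from rfl]
  rw [Finset.sum_range_reflect (fun j : ℕ => imchoose b (j:ℤ)) (n+1)]
  rw [hockey b n, fc_single]
  congr 1
  omega

lemma cfVal_cons (a : ℤ) (l : List ℤ) (hl : l ≠ []) : cfVal (a::l) = a + 1 / cfVal l := by
  cases l with
  | nil => exact absurd rfl hl
  | cons b t => rfl

lemma one_le_cfVal : ∀ l : List ℤ, l ≠ [] → (∀ x ∈ l, 1 ≤ x) → 1 ≤ cfVal l := by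
  intro l
  induction l with
  | nil => intro h; exact absurd rfl h
  | cons a t ih =>
    intro _ hpos
    have ha : (1:ℚ) ≤ (a:ℚ) := by exact_mod_cast hpos a (by simp)
    rcases eq_or_ne t [] with rfl | ht
    · show (1:ℚ) ≤ cfVal [a]
      show (1:ℚ) ≤ (a:ℚ)
      exact ha
    · rw [cfVal_cons a t ht]
      have h1 : 1 ≤ cfVal t := ih ht (fun x hx => hpos x (by simp [hx]))
      have h2 : 0 < 1 / cfVal t := by positivity
      linarith

lemma cfVal_gt (a : ℤ) (l : List ℤ) (hl : l ≠ []) (hpos : ∀ x ∈ l, 1 ≤ x) :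
    (a:ℚ) < cfVal (a::l) := by
  rw [cfVal_cons a l hl]
  have h1 : 1 ≤ cfVal l := one_le_cfVal l hl hpos
  have h2 : 0 < 1 / cfVal l := by positivity
  linarith

lemma cfVal_le (a : ℤ) (l : List ℤ) (hl : l ≠ []) (hpos : ∀ x ∈ l, 1 ≤ x) :
    cfVal (a::l) ≤ (a:ℚ) + 1 := by
  rw [cfVal_cons a l hl]
  have h1 : 1 ≤ cfVal l := one_le_cfVal l hl hpos
  have h2 : 1 / cfVal l ≤ 1 := by
    rw [div_le_one (by linarith)]
    exact h1
  linarith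

lemma cfVal_eq_one (l : List ℤ) (hl : l ≠ []) (hpos : ∀ x ∈ l, 1 ≤ x)
    (h : cfVal l = 1) : l = [1] := by
  cases l with
  | nil => exact absurd rfl hl
  | cons a t =>
    rcases eq_or_ne t [] with rfl | ht
    · have : ((a:ℚ)) = 1 := h
      have : a = 1 := by exact_mod_cast this
      rw [this]
    · exfalso
      have h1 : (a:ℚ) < cfVal (a::t) := cfVal_gt a t ht (fun x hx => hpos x (by simp [hx]))
      have ha : (1:ℚ) ≤ (a:ℚ) := by exact_mod_cast hpos a (by simp)
      rw [h] at h1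
      linarith

lemma top_lemma (m : ℕ) (a : ℤ) (ha : 1 ≤ a) (r : List ℤ) (hr : r ≠ [])
    (hpos : ∀ x ∈ r, 1 ≤ x) : LRlt m (fc m (a::r)) (fc m [a]) := by
  rw [fc_cons, show fc m [a] = app m a (fc m []) from fc_cons m a []]
  apply transfer m a ha (fc m []) (fc m r) (fc_nil_nonneg m)
    (by rw [fc_nil_zero]; norm_num) (fc_pos m r hr hpos)
  · intro κ lam hkl
    have hlam : lam ≠ (⟨0, by omega⟩ : Fin (m+1)) := by
      intro h
      rw [h] at hkl
      exact absurd hkl (by simp [Fin.lt_def])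
    rw [fc_nil m lam, if_neg hlam, zero_mul]
    exact mul_nonneg (fc_nil_nonneg m κ) (fc_pos m r hr hpos lam).le
  · intro lam hlam
    have hlam' : lam ≠ (⟨0, by omega⟩ : Fin (m+1)) := by
      intro h
      rw [h] at hlam
      exact absurd hlam (lt_irrefl _)
    rw [fc_nil m lam, if_neg hlam', zero_mul, fc_nil_zero, one_mul]
    exact fc_pos m r hr hpos lam

lemma mainLR (m : ℕ) : ∀ (N : ℕ) (l l' : List ℤ), l.length + l'.length ≤ N → l ≠ [] → l' ≠ [] →
    (∀ x ∈ l, 1 ≤ x) → (∀ x ∈ l', 1 ≤ x) → cfVal l' < cfVal l → LRlt m (fc m l) (fc m l') := by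
  intro N
  induction N with
  | zero =>
    intro l l' hlen hl hl' _ _ _
    exfalso
    have h1 := List.length_pos_iff.mpr hl
    have h2 := List.length_pos_iff.mpr hl'
    omega
  | succ N ih =>
    intro l l' hlen hl hl' hpos hpos' hval
    obtain ⟨a, r, rfl⟩ := List.exists_cons_of_ne_nil hl
    obtain ⟨b, r', rfl⟩ := List.exists_cons_of_ne_nil hl'
    simp only [List.length_cons] at hlen
    have ha : 1 ≤ a := hpos a (by simp)
    have hb : 1 ≤ b := hpos' b (by simp)
    have hposr : ∀ x ∈ r, 1 ≤ x := fun x hx => hpos x (by simp [hx])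
    have hposr' : ∀ x ∈ r', 1 ≤ x := fun x hx => hpos' x (by simp [hx])
    by_cases hab : a = b
    · subst hab
      rcases eq_or_ne r' [] with rfl | hr'
      · rcases eq_or_ne r [] with rfl | hr
        · exact absurd hval (lt_irrefl _)
        · exact top_lemma m a ha r hr hposr
      · rcases eq_or_ne r [] with rfl | hr
        · exfalso
          have h1 := cfVal_gt a r' hr' hposr'
          have h2 : cfVal [a] = (a:ℚ) := rfl
          rw [h2] at hval
          linarith
        · have hvr := one_le_cfVal r hr hposr
          have hvr' := one_le_cfVal r' hr' hposr'
          have hlt : cfVal r < cfVal r' := by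
            rw [cfVal_cons a r hr, cfVal_cons a r' hr'] at hval
            have h1 : 1 / cfVal r' < 1 / cfVal r := by linarith
            have h2 := (div_lt_div_iff₀ (by linarith : (0:ℚ) < cfVal r') (by linarith : (0:ℚ) < cfVal r)).mp h1
            linarith
          have hIH : LRlt m (fc m r') (fc m r) :=
            ih r' r (by omega) hr' hr hposr' hposr hlt
          rw [fc_cons, fc_cons]
          apply transfer m a ha (fc m r') (fc m r)
            (fun κ => (fc_pos m r' hr' hposr' κ).le) (fc_pos m r' hr' hposr' _)
            (fc_pos m r hr hposr)
          · exact fun κ lam h => (hIH κ lam h).le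
          · exact fun lam h => hIH ⟨0, by omega⟩ lam h
    · have hbalt : b < a := by
        have h1 : cfVal (a::r) ≤ (a:ℚ) + 1 := by
          rcases eq_or_ne r [] with rfl | hr
          · have h2 : cfVal [a] = (a:ℚ) := rfl
            rw [h2]; linarith
          · exact cfVal_le a r hr hposr
        have h2 : (b:ℚ) ≤ cfVal (b::r') := by
          rcases eq_or_ne r' [] with rfl | hr'
          · exact le_of_eq rfl
          · exact (cfVal_gt b r' hr' hposr').le
        have h3 : (b:ℚ) < (a:ℚ) + 1 := by linarith
        have h4 : b < a + 1 := by exact_mod_cast h3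
        omega
      have posA : ∀ i, 0 < fc m (a::r) i := fc_pos m _ (by simp) hpos
      have posa : ∀ i, 0 < fc m [a] i := fc_single_pos m a ha
      have w1 : LRle m (fc m (a::r)) (fc m [a]) := by
        rcases eq_or_ne r [] with rfl | hr
        · exact LRle_refl m _
        · exact (top_lemma m a ha r hr hposr).le
      rcases eq_or_ne r' [] with rfl | hr'
      · have hint := intLR m a b hb hbalt
        rcases eq_or_ne r [] with rfl | hr
        · exact hint
        · exact LR_lt_le posA posa (fc_single_pos m b hb)
            (top_lemma m a ha r hr hposr) hint.le
      · have posb1 : ∀ i, 0 < fc m [b+1] i := fc_single_pos m (b+1) (by omega)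
        have posl' : ∀ i, 0 < fc m (b::r') i := fc_pos m _ (by simp) hpos'
        have w2 : LRle m (fc m [a]) (fc m [b+1]) := by
          rcases eq_or_ne a (b+1) with rfl | hane
          · exact LRle_refl m _
          · exact (intLR m a (b+1) (by omega) (by omega)).le
        rcases eq_or_ne r' [1] with rfl | hr1
        · have hvl' : cfVal (b::[1]) = (b:ℚ) + 1 := by
            rw [cfVal_cons b [1] (by simp)]
            have : cfVal [1] = ((1:ℤ):ℚ) := rfl
            rw [this]
            norm_num
          rw [show fc m (b::[1]) = fc m [b+1] from fc_id m b]
          rcases eq_or_ne a (b+1) with rfl | hane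
          · have hr : r ≠ [] := by
              rintro rfl
              rw [hvl'] at hval
              have h5 : cfVal [b+1] = ((b+1:ℤ):ℚ) := rfl
              rw [h5] at hval
              push_cast at hval
              linarith
            exact top_lemma m (b+1) (by omega) r hr hposr
          · have hint := intLR m a (b+1) (by omega) (by omega)
            rcases eq_or_ne r [] with rfl | hr
            · exact hint
            · exact LR_lt_le posA posa posb1 (top_lemma m a ha r hr hposr) hint.le
        · have hv1 : 1 ≤ cfVal r' := one_le_cfVal r' hr' hposr'
          have hne1 : cfVal r' ≠ 1 := fun h => hr1 (cfVal_eq_one r' hr' hposr' h)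
          have hgt1 : cfVal [1] < cfVal r' := by
            have h6 : cfVal [1] = ((1:ℤ):ℚ) := rfl
            rw [h6]
            push_cast
            exact lt_of_le_of_ne hv1 (Ne.symm hne1)
          have hIH : LRlt m (fc m r') (fc m [1]) :=
            ih r' [1] (by simp; omega) hr' (by simp) hposr'
              (by intro x hx; simp at hx; omega) hgt1
          have T3 : LRlt m (fc m [b+1]) (fc m (b::r')) := by
            rw [← fc_id m b, fc_cons, fc_cons]
            apply transfer m b hb (fc m r') (fc m [1])
              (fun κ => (fc_pos m r' hr' hposr' κ).le) (fc_pos m r' hr' hposr' _)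
              (fc_pos m [1] (by simp) (by intro x hx; simp at hx; omega))
            · exact fun κ lam h => (hIH κ lam h).le
            · exact fun lam h => hIH ⟨0, by omega⟩ lam h
          have w12 : LRle m (fc m (a::r)) (fc m [b+1]) := LR_le_le posA posa posb1 w1 w2
          exact LR_le_lt posA posb1 posl' w12 T3


/-- For rational numbers `1 ≤ x < y` and each `1 ≤ i ≤ m`, the ratio maps satisfy
`r_{i,m}(x)/r_{i-1,m}(x) < r_{i,m}(y)/r_{i-1,m}(y)`; that is, each map
`x ↦ r_{i,m}(x)/r_{i-1,m}(x)` is strictly increasing on `[1, ∞)`. -/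
theorem rCF_ratio_strictMono (m : ℕ) (x y : ℚ) (hx : 1 ≤ x) (hxy : x < y)
    (lx ly : List ℤ) (hlx : lx ≠ []) (hly : ly ≠ [])
    (hposx : ∀ a ∈ lx, 1 ≤ a) (hposy : ∀ a ∈ ly, 1 ≤ a)
    (hvalx : cfVal lx = x) (hvaly : cfVal ly = y)
    (i : ℕ) (hi : 1 ≤ i) (him : i ≤ m) :
    rCF m lx i / rCF m lx (i - 1) < rCF m ly i / rCF m ly (i - 1) := by
  have hvord : cfVal lx < cfVal ly := by rw [hvalx, hvaly]; exact hxy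
  have hM : LRlt m (fc m ly) (fc m lx) :=
    mainLR m (ly.length + lx.length) ly lx le_rfl hly hlx hposy hposx hvord
  set i1 : Fin (m+1) := ⟨m - i, by omega⟩ with hi1
  set i2 : Fin (m+1) := ⟨m - (i-1), by omega⟩ with hi2
  set imx : Fin (m+1) := ⟨m, by omega⟩ with himx
  have hi12 : i1 < i2 := by
    rw [hi1, hi2, Fin.mk_lt_mk]
    omega
  have key := hM i1 i2 hi12
  have px1 := fc_pos m lx hlx hposx i1
  have px2 := fc_pos m lx hlx hposx i2
  have pxm := fc_pos m lx hlx hposx imx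
  have py1 := fc_pos m ly hly hposy i1
  have py2 := fc_pos m ly hly hposy i2
  have pym := fc_pos m ly hly hposy imx
  have cancel : ∀ (A B C : ℚ), 0 < B → 0 < C → (A / C) / (B / C) = A / B := by
    intro A B C hB hC
    field_simp
  have elx : rCF m lx i / rCF m lx (i-1) = fc m lx i1 / fc m lx i2 := by
    show (fc m lx i1 / fc m lx imx) / (fc m lx i2 / fc m lx imx) = _
    exact cancel _ _ _ px2 pxm
  have ely : rCF m ly i / rCF m ly (i-1) = fc m ly i1 / fc m ly i2 := by
    show (fc m ly i1 / fc m ly imx) / (fc m ly i2 / fc m ly imx) = _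
    exact cancel _ _ _ py2 pym
  rw [elx, ely, div_lt_div_iff₀ px2 py2]
  linarith [key]
end
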